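/- arXiv:2007.15768 — 3 statements merged into one kernel-verified Lean document; each statement's English description precedes it below -/
import Mathlib

section
/- Let Z be a special symbol of defect 1 and size (m+1,m) and Z' a special symbol of defect 0 and size (m',m') with m' = m or m' = m+1. Then: (i) if m' = m+1, Z' is regular and D_Z = {Z'}, then Z is regular; (ii) if m' = m, Z is regular and D_{Z'} = {Z}, then Z' is regular. -/
open scoped symmDiff

/-- A symbol: a pair of finsets of naturals (its two rows, each read in
strictly decreasing order). -/
abbrev Symb :=  Finset ℕ × Finset ℕ

/-- The strictly decreasing enumeration of a finset of naturals. -/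
def rowList (s : Finset ℕ) : List ℕ := (s.sort (· ≤ ·)).reverse

/-- The `i`-th entry (0-based) of the strictly decreasing enumeration of `s`. -/
def ent (s : Finset ℕ) (i : ℕ) : Option ℕ := (rowList s)[i]?

/-- Impose a relation on two optional entries whenever both exist. -/
def oRel (r : ℕ → ℕ → Prop) : Option ℕ → Option ℕ → Prop
  | some x, some y => r x y
  | _, _ => True

/-- `Z` is a special symbol of defect 1 and size `(m+1, m)`. -/
def IsSpecial1 (Z : Symb) (m : ℕ) : Prop :=
  Z.1.card = m + 1 ∧ Z.2.card = m ∧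
  (∀ i, oRel (· ≥ ·) (ent Z.1 i) (ent Z.2 i)) ∧
  (∀ i, oRel (· ≥ ·) (ent Z.2 i) (ent Z.1 (i + 1)))

/-- `Z'` is a special symbol of defect 0 and size `(m', m')`. -/
def IsSpecial0 (Z : Symb) (m' : ℕ) : Prop :=
  Z.1.card = m' ∧ Z.2.card = m' ∧
  (∀ i, oRel (· ≥ ·) (ent Z.1 i) (ent Z.2 i)) ∧
  (∀ i, oRel (· ≥ ·) (ent Z.2 i) (ent Z.1 (i + 1)))

/-- `Z_I`: the entries of `Z` lying in exactly one row (row remembered). -/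
def ZI (Z : Symb) : Symb := (Z.1 \ Z.2, Z.2 \ Z.1)

/-- `M` is a subset of `Z_I`. -/
def SubZI (M Z : Symb) : Prop := M.1 ⊆ Z.1 \ Z.2 ∧ M.2 ⊆ Z.2 \ Z.1

/-- `Z` is regular: no degenerate entries. -/
def Regular (Z : Symb) : Prop := Disjoint Z.1 Z.2

/-- `Λ_M`: exchange the rows of the entries of `M`. -/
def lam (Z M : Symb) : Symb := ((Z.1 \ M.1) ∪ M.2, (Z.2 \ M.2) ∪ M.1)

/-- `S̄_Z = {Λ_M : M ⊆ Z_I}`. -/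
def Sbar (Z : Symb) : Set Symb := {Λ | ∃ M, SubZI M Z ∧ Λ = lam Z M}

/-- Size and inequality conditions of `B̄⁺_{Z,Z'}` in the case `m' = m`. -/
def Bm (Λ Λ' : Symb) : Prop :=
  Λ'.1.card = Λ.2.card ∧ Λ'.2.card + 1 = Λ.1.card ∧
  (∀ i, oRel (· > ·) (ent Λ.1 i) (ent Λ'.2 i)) ∧
  (∀ i, oRel (· ≥ ·) (ent Λ'.2 i) (ent Λ.1 (i + 1))) ∧
  (∀ i, oRel (· > ·) (ent Λ.2 i) (ent Λ'.1 (i + 1))) ∧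
  (∀ i, oRel (· ≥ ·) (ent Λ'.1 i) (ent Λ.2 i))

/-- Size and inequality conditions of `B̄⁺_{Z,Z'}` in the case `m' = m + 1`. -/
def Bm1 (Λ Λ' : Symb) : Prop :=
  Λ'.1.card = Λ.2.card + 1 ∧ Λ'.2.card = Λ.1.card ∧
  (∀ i, oRel (· ≥ ·) (ent Λ.1 i) (ent Λ'.2 i)) ∧
  (∀ i, oRel (· > ·) (ent Λ'.2 i) (ent Λ.1 (i + 1))) ∧
  (∀ i, oRel (· ≥ ·) (ent Λ.2 i) (ent Λ'.1 (i + 1))) ∧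
  (∀ i, oRel (· > ·) (ent Λ'.1 i) (ent Λ.2 i))

/-- The relation `B̄⁺_{Z,Z'}`. -/
def BbarPlus (Z Z' : Symb) (m m' : ℕ) (Λ Λ' : Symb) : Prop :=
  Λ ∈ Sbar Z ∧ Λ' ∈ Sbar Z' ∧
  ((m' = m ∧ Bm Λ Λ') ∨ (m' = m + 1 ∧ Bm1 Λ Λ'))

/-- The relation `D_{Z,Z'}`. -/
def DRel (Z Z' : Symb) (m m' : ℕ) (A A' : Symb) : Prop :=
  BbarPlus Z Z' m m' A A' ∧
  A.1.card = m + 1 ∧ A.2.card = m ∧ A'.1.card = m' ∧ A'.2.card = m'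

/-- `{c, d}` is a consecutive pair in `Z_I`. -/
def ConsecPair (Z : Symb) (c d : ℕ) : Prop :=
  c ∈ Z.1 \ Z.2 ∧ d ∈ Z.2 \ Z.1 ∧
  ∀ x ∈ (Z.1 \ Z.2) ∪ (Z.2 \ Z.1), ¬(min c d < x ∧ x < max c d)

/-!
Rows are compared through the counting functions `k ↦ #{y ∈ s | k ≤ y}`, which turn every
interlacing condition of `B̄⁺` into a linear inequality. Both parts then reduce to one statement
about `Bm Λ Λ'` with `Λ` regular (part (i) because `Bm1 Z Z'` is `Bm Z' Z`). If `Λ'` has a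
degenerate entry `t`, counting shows that `Λ` has more entries `≤ t` than `Λ'` has distinct
ones, so some entries `v < v'` of `Λ` have no entry of `Λ'` in `[v, v')`. Interlacing separates
any two entries of one row, so `v` and `v'` lie in different rows of `Λ`; exchanging them gives
a second element of `S̄_Λ` related to `Λ'`, contradicting uniqueness.
-/

namespace Symbol

open Finset

theorem _root_.List.le_iff_lt_countP_of_pairwise_gt {l : List ℕ} (hl : l.Pairwise (· > ·))
    {i x k : ℕ} (hx : l[i]? = some x) : k ≤ x ↔ i < l.countP (fun y => k ≤ y) := by
  induction l generalizing i with
  | nil => simp at hx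
  | cons a l ih =>
    obtain ⟨ha, hl⟩ := List.pairwise_cons.mp hl
    rw [List.countP_cons]
    cases i with
    | zero =>
      obtain rfl : a = x := by simpa using hx
      by_cases hk : k ≤ a
      · simp [hk]
      · have : l.countP (fun y => k ≤ y) = 0 :=
          List.countP_eq_zero.mpr fun y hy => by
            have := ha y hy
            simp only [decide_eq_true_eq]
            omega
        simp [hk, this]
    | succ i =>
      have hx' : l[i]? = some x := by simpa using hx
      have hxa : x < a := ha x (List.mem_of_getElem? hx')
      have := ih hl hx'
      by_cases hk : k ≤ a <;> simp [hk] <;> omega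

def countGe (s : Finset ℕ) (k : ℕ) : ℕ := #{y ∈ s | k ≤ y}

theorem countGe_eq_countP_rowList (s : Finset ℕ) (k : ℕ) :
    countGe s k = (rowList s).countP (fun y => k ≤ y) := by
  rw [countGe, rowList, List.countP_reverse, ← Multiset.coe_countP, Finset.sort_eq,
    Multiset.countP_eq_card_filter]
  rfl

theorem le_iff_lt_countGe_of_ent {s : Finset ℕ} {i x k : ℕ} (hx : ent s i = some x) :
    k ≤ x ↔ i < countGe s k := by
  rw [countGe_eq_countP_rowList]
  exact List.le_iff_lt_countP_of_pairwise_gt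
    (List.pairwise_reverse.mpr (Finset.sortedLT_sort s).pairwise) hx

theorem exists_ent_iff {s : Finset ℕ} {i : ℕ} : (∃ x, ent s i = some x) ↔ i < #s := by
  simp [ent, rowList, ← Option.isSome_iff_exists]

theorem countGe_le_card (s : Finset ℕ) (k : ℕ) : countGe s k ≤ #s :=
  card_filter_le _ _

theorem countGe_antitone (s : Finset ℕ) : Antitone (countGe s) :=
  fun _ _ hkl => card_le_card (monotone_filter_right _ fun _ _ hy => hkl.trans hy)

theorem countGe_lt_of_mem {s : Finset ℕ} {x k : ℕ} (hx : x ∈ s) (hxk : x < k) :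
    countGe s k < countGe s x := by
  refine card_lt_card ⟨monotone_filter_right _ fun _ _ hy => hxk.le.trans hy, fun h => ?_⟩
  have := (mem_filter.mp (h (mem_filter.mpr ⟨hx, le_rfl⟩))).2
  omega

theorem countGe_eq_of_disjoint_Ico {s : Finset ℕ} {a b k : ℕ} (h : Disjoint s (Ico a b))
    (hak : a ≤ k) (hkb : k ≤ b) : countGe s k = countGe s a := by
  refine congrArg card (filter_congr fun y hy => ⟨fun hky => hak.trans hky, fun hay => ?_⟩)
  by_contra hyk
  exact disjoint_left.mp h hy (mem_Ico.mpr ⟨hay, by omega⟩)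

theorem card_filter_le_add_countGe (s : Finset ℕ) (t : ℕ) :
    #{x ∈ s | x ≤ t} + countGe s (t + 1) = #s := by
  rw [countGe, ← card_filter_add_card_filter_not (s := s) (p := (· ≤ t))]
  congr 2
  exact filter_congr fun _ _ => by omega

theorem card_insert_erase {s : Finset ℕ} {v w : ℕ} (hv : v ∈ s) (hw : w ∉ s) :
    #(insert w (s.erase v)) = #s := by
  rw [card_insert_of_notMem fun h => hw (mem_of_mem_erase h), card_erase_add_one hv]

theorem countGe_insert_erase {s : Finset ℕ} {v w : ℕ} (hv : v ∈ s) (hw : w ∉ s) (k : ℕ) :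
    countGe (insert w (s.erase v)) k + (if k ≤ v then 1 else 0)
      = countGe s k + (if k ≤ w then 1 else 0) := by
  unfold countGe
  rw [filter_insert, filter_erase]
  have hw' : w ∉ ({y ∈ s | k ≤ y}).erase v := fun h =>
    hw (mem_filter.mp (mem_of_mem_erase h)).1
  split_ifs with hkw hkv hkv
  · rw [card_insert_of_notMem hw', card_erase_add_one (by simp [hv, hkv])]
  · rw [card_insert_of_notMem hw', erase_eq_of_notMem (by simp [hkv])]
  · rw [card_erase_add_one (by simp [hv, hkv]), add_zero]
  · rw [erase_eq_of_notMem (by simp [hkv])]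

/-- `RowDominates s t d e` says `t_{i+e} + d ≤ s_i` whenever both entries exist; the relations
`>`, `≥` of `B̄⁺` between a row and a possibly shifted row are the cases `d, e ∈ {0, 1}`. -/
def RowDominates (s t : Finset ℕ) (d e : ℕ) : Prop :=
  ∀ i, oRel (fun x y => y + d ≤ x) (ent s i) (ent t (i + e))

theorem rowDominates_iff {s t : Finset ℕ} {d e : ℕ} :
    RowDominates s t d e ↔ ∀ k, min (countGe t k) (#s + e) ≤ countGe s (k + d) + e := by
  constructor
  · intro h k
    by_contra! hlt
    set j := min (countGe t k) (#s + e)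
    obtain ⟨v, hv⟩ := exists_ent_iff.mpr (show j - 1 < #t by
      have := countGe_le_card t k; omega)
    obtain ⟨u, hu⟩ := exists_ent_iff.mpr (show j - 1 - e < #s by omega)
    have hkv := (le_iff_lt_countGe_of_ent (k := k) hv).mpr (by omega)
    have hvu : v + d ≤ u := by
      have := h (j - 1 - e)
      rwa [hu, show j - 1 - e + e = j - 1 by omega, hv] at this
    have := (le_iff_lt_countGe_of_ent (k := k + d) hu).mp (by omega)
    omega
  · intro h i
    rcases hu : ent s i with _ | u
    · trivial
    rcases hv : ent t (i + e) with _ | v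
    · trivial
    have hi := exists_ent_iff.mp ⟨u, hu⟩
    have hiv := (le_iff_lt_countGe_of_ent (k := v) hv).mp le_rfl
    exact (le_iff_lt_countGe_of_ent hu).mpr (by have := h v; omega)

/-- Exchanging `v ∈ t` for `w ∉ t` moves no entry of `t` past an entry of `s`, so the
domination survives. -/
theorem RowDominates.insert_erase_right {s t : Finset ℕ} {e v w : ℕ}
    (h : RowDominates s t 0 e) (hv : v ∈ t) (hw : w ∉ t)
    (hgap : Disjoint s (Ico (min v w) (max v w))) :
    RowDominates s (insert w (t.erase v)) 0 e := by
  rw [rowDominates_iff] at h ⊢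
  simp only [add_zero] at h ⊢
  intro k
  have hk := h k
  have hs := countGe_insert_erase hv hw k
  by_cases hvk : v < k ∧ k ≤ w
  · rw [min_eq_left (by omega), max_eq_right (by omega)] at hgap
    have hsk := countGe_eq_of_disjoint_Ico hgap hvk.1.le hvk.2
    have htk := countGe_lt_of_mem hv hvk.1
    have hv' := h v
    split_ifs at hs <;> omega
  · split_ifs at hs <;> omega

theorem RowDominates.insert_erase_left {s t : Finset ℕ} {e v w : ℕ}
    (h : RowDominates s t 1 e) (hv : v ∈ s) (hw : w ∉ s)
    (hgap : Disjoint t (Ico (min v w) (max v w))) :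
    RowDominates (insert w (s.erase v)) t 1 e := by
  rw [rowDominates_iff] at h ⊢
  rw [card_insert_erase hv hw]
  intro k
  have hk := h k
  have hs := countGe_insert_erase hv hw (k + 1)
  by_cases hwk : w ≤ k ∧ k < v
  · rw [min_eq_right (by omega), max_eq_left (by omega)] at hgap
    have htk := countGe_eq_of_disjoint_Ico hgap hwk.1 hwk.2.le
    have htv := countGe_eq_of_disjoint_Ico hgap (k := v) (by omega) le_rfl
    have hsv := countGe_lt_of_mem hv (Nat.lt_add_one v)
    have hsk := countGe_antitone s (show k + 1 ≤ v by omega)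
    have hv' := h v
    split_ifs at hs <;> omega
  · split_ifs at hs <;> omega

theorem not_disjoint_Ico_of_rowDominates {u w : Finset ℕ} {e e' : ℕ}
    (h₁ : RowDominates u w 1 e) (h₂ : RowDominates w u 0 e') (he : e + e' ≤ 1)
    (hcard : #u ≤ #w + e') {x x' : ℕ} (hx : x ∈ u) (hx' : x' ∈ u) (hlt : x < x') :
    ¬Disjoint w (Ico x x') := by
  intro hgap
  rw [rowDominates_iff] at h₁ h₂
  have hw := countGe_eq_of_disjoint_Ico hgap hlt.le le_rfl
  have := h₁ x'
  have : min (countGe u x) (#w + e') ≤ countGe w x + e' := h₂ x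
  have := countGe_lt_of_mem hx hlt
  have := countGe_lt_of_mem hx' (Nat.lt_add_one x')
  have := countGe_le_card u x
  omega

theorem exists_lt_disjoint_Ico_of_card_filter_lt {U V : Finset ℕ} {t : ℕ} (ht : t ∈ V)
    (hcard : #{x ∈ V | x ≤ t} < #{x ∈ U | x ≤ t}) :
    ∃ v ∈ U, ∃ v' ∈ U, v < v' ∧ Disjoint V (Ico v v') := by
  let next (v : ℕ) : ℕ := sInf {z | z ∈ V ∧ v ≤ z}
  have next_spec {v : ℕ} (hv : v ≤ t) : next v ∈ V ∧ v ≤ next v ∧ next v ≤ t :=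
    have h := Nat.sInf_mem (s := {z | z ∈ V ∧ v ≤ z}) ⟨t, ht, hv⟩
    ⟨h.1, h.2, Nat.sInf_le ⟨ht, hv⟩⟩
  have hmaps : ∀ v ∈ {x ∈ U | x ≤ t}, next v ∈ {x ∈ V | x ≤ t} := fun v hv => by
    have := next_spec (mem_filter.mp hv).2
    exact mem_filter.mpr ⟨this.1, this.2.2⟩
  obtain ⟨v, hv, v', hv', hne, heq⟩ := exists_ne_map_eq_of_card_lt_of_maps_to hcard hmaps
  rw [mem_filter] at hv hv'
  have key {a b : ℕ} (ha : a ∈ U ∧ a ≤ t) (hb : b ∈ U ∧ b ≤ t) (hab : a < b)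
      (hnext : next a = next b) : ∃ v ∈ U, ∃ v' ∈ U, v < v' ∧ Disjoint V (Ico v v') := by
    refine ⟨a, ha.1, b, hb.1, hab, disjoint_left.mpr fun z hz hzI => ?_⟩
    rw [mem_Ico] at hzI
    have : next a ≤ z := Nat.sInf_le ⟨hz, hzI.1⟩
    have := (next_spec hb.2).2.1
    omega
  rcases lt_or_gt_of_ne hne with hlt | hlt
  · exact key hv hv' hlt heq
  · exact key hv' hv hlt heq.symm

theorem bm_iff {P Q R S : Finset ℕ} :
    Bm (P, Q) (R, S) ↔ #R = #Q ∧ #S + 1 = #P ∧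
      RowDominates P S 1 0 ∧ RowDominates S P 0 1 ∧
      RowDominates Q R 1 1 ∧ RowDominates R Q 0 0 :=
  Iff.rfl

theorem bm1_iff_bm {Λ Λ' : Symb} : Bm1 Λ Λ' ↔ Bm Λ' Λ := by
  unfold Bm1 Bm
  constructor
  · rintro ⟨h₁, h₂, h₃, h₄, h₅, h₆⟩
    exact ⟨h₂.symm, h₁.symm, h₆, h₅, h₄, h₃⟩
  · rintro ⟨h₁, h₂, h₃, h₄, h₅, h₆⟩
    exact ⟨h₂.symm, h₁.symm, h₆, h₅, h₄, h₃⟩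

theorem lam_singleton (Λ : Symb) (x y : ℕ) :
    lam Λ ({x}, {y}) = (insert y (Λ.1.erase x), insert x (Λ.2.erase y)) := by
  simp only [lam, sdiff_singleton_eq_erase, union_comm _ {_}, ← insert_eq]

theorem lam_singleton_mem_Sbar {Λ : Symb} (hreg : Regular Λ) {x y : ℕ} (hx : x ∈ Λ.1)
    (hy : y ∈ Λ.2) : lam Λ ({x}, {y}) ∈ Sbar Λ :=
  ⟨({x}, {y}), ⟨singleton_subset_iff.mpr (mem_sdiff.mpr ⟨hx, disjoint_left.mp hreg hx⟩),
    singleton_subset_iff.mpr (mem_sdiff.mpr ⟨hy, disjoint_right.mp hreg hy⟩)⟩, rfl⟩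

theorem lam_singleton_ne {Λ : Symb} (hreg : Regular Λ) {x y : ℕ} (hy : y ∈ Λ.2) :
    lam Λ ({x}, {y}) ≠ Λ := fun h =>
  disjoint_right.mp hreg hy (h ▸ (lam_singleton Λ x y ▸ mem_insert_self y _ :
    y ∈ (lam Λ ({x}, {y})).1))

theorem bm_lam_singleton {P Q R S : Finset ℕ} (h : Bm (P, Q) (R, S)) (hreg : Regular (P, Q))
    {x y : ℕ} (hx : x ∈ P) (hy : y ∈ Q)
    (hgap : Disjoint (R ∪ S) (Ico (min x y) (max x y))) :
    Bm (lam (P, Q) ({x}, {y})) (R, S) := by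
  obtain ⟨hRQ, hSP, hPS, hSP', hQR, hRQ'⟩ := bm_iff.mp h
  have hxQ : x ∉ Q := disjoint_left.mp hreg hx
  have hyP : y ∉ P := disjoint_right.mp hreg hy
  obtain ⟨hgapR, hgapS⟩ := disjoint_union_left.mp hgap
  rw [min_comm, max_comm] at hgapR
  rw [lam_singleton]
  exact bm_iff.mpr ⟨hRQ.trans (card_insert_erase hy hxQ).symm,
    hSP.trans (card_insert_erase hx hyP).symm,
    hPS.insert_erase_left hx hyP hgapS, hSP'.insert_erase_right hx hyP hgapS,
    hQR.insert_erase_left hy hxQ hgapR, hRQ'.insert_erase_right hy hxQ hgapR⟩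

theorem card_filter_union_lt {P Q R S : Finset ℕ} {t : ℕ} (hPQ : Disjoint P Q)
    (htR : t ∈ R) (htS : t ∈ S) (hP : #{x ∈ S | x ≤ t} ≤ #{x ∈ P | x ≤ t})
    (hQ : #{x ∈ R | x ≤ t} ≤ #{x ∈ Q | x ≤ t}) :
    #{x ∈ R ∪ S | x ≤ t} < #{x ∈ P ∪ Q | x ≤ t} := by
  rw [filter_union, filter_union, card_union_of_disjoint (disjoint_filter_filter hPQ)]
  have hRS := card_union_add_card_inter {x ∈ R | x ≤ t} {x ∈ S | x ≤ t}
  have hinter : 0 < #({x ∈ R | x ≤ t} ∩ {x ∈ S | x ≤ t}) :=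
    card_pos.mpr ⟨t, mem_inter.mpr
      ⟨mem_filter.mpr ⟨htR, le_rfl⟩, mem_filter.mpr ⟨htS, le_rfl⟩⟩⟩
  omega

theorem exists_bm_of_not_regular {Λ Λ' : Symb} (h : Bm Λ Λ') (hreg : Regular Λ)
    (hdeg : ¬Regular Λ') : ∃ Λ₁ ∈ Sbar Λ, Λ₁ ≠ Λ ∧ Bm Λ₁ Λ' := by
  obtain ⟨P, Q⟩ := Λ
  obtain ⟨R, S⟩ := Λ'
  obtain ⟨t, htR, htS⟩ := not_disjoint_iff.mp hdeg
  obtain ⟨hRQ, hSP, hPS, hSP', hQR, hRQ'⟩ := bm_iff.mp h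
  have hlowP : #{x ∈ S | x ≤ t} ≤ #{x ∈ P | x ≤ t} := by
    have : min (countGe P (t + 1)) (#S + 1) ≤ countGe S (t + 1) + 1 :=
      rowDominates_iff.mp hSP' (t + 1)
    have := countGe_le_card P (t + 1)
    have := card_filter_le_add_countGe P t
    have := card_filter_le_add_countGe S t
    omega
  have hlowQ : #{x ∈ R | x ≤ t} ≤ #{x ∈ Q | x ≤ t} := by
    have : min (countGe Q (t + 1)) (#R + 0) ≤ countGe R (t + 1) + 0 :=
      rowDominates_iff.mp hRQ' (t + 1)
    have := countGe_le_card Q (t + 1)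
    have := card_filter_le_add_countGe Q t
    have := card_filter_le_add_countGe R t
    omega
  have hlow := card_filter_union_lt hreg htR htS hlowP hlowQ
  obtain ⟨v, hv, v', hv', hlt, hgap⟩ :=
    exists_lt_disjoint_Ico_of_card_filter_lt (mem_union_left S htR) hlow
  rcases mem_union.mp hv with hvP | hvQ <;> rcases mem_union.mp hv' with hv'P | hv'Q
  · exact absurd (disjoint_union_left.mp hgap).2
      (not_disjoint_Ico_of_rowDominates hPS hSP' le_rfl hSP.ge hvP hv'P hlt)
  · refine ⟨_, lam_singleton_mem_Sbar hreg hvP hv'Q, lam_singleton_ne hreg hv'Q,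
      bm_lam_singleton h hreg hvP hv'Q ?_⟩
    rwa [min_eq_left hlt.le, max_eq_right hlt.le]
  · refine ⟨_, lam_singleton_mem_Sbar hreg hv'P hvQ, lam_singleton_ne hreg hvQ,
      bm_lam_singleton h hreg hv'P hvQ ?_⟩
    rwa [min_eq_right hlt.le, max_eq_left hlt.le]
  · exact absurd (disjoint_union_left.mp hgap).1
      (not_disjoint_Ico_of_rowDominates hQR hRQ' le_rfl hRQ.ge hvQ hv'Q hlt)

theorem regular_of_setOf_dRel_right_eq_singleton {Z Z' : Symb} {m : ℕ} (hreg : Regular Z')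
    (hD : {Λ' | DRel Z Z' m (m + 1) Z Λ'} = {Z'}) : Regular Z := by
  by_contra hZ
  obtain ⟨hZZ', huniq⟩ := Set.eq_singleton_iff_unique_mem.mp hD
  obtain ⟨⟨hSbar, -, hB⟩, hcard⟩ := hZZ'
  have hbm : Bm Z' Z := bm1_iff_bm.mp (hB.resolve_left (by omega)).2
  obtain ⟨Λ, hΛ, hne, hbmΛ⟩ := exists_bm_of_not_regular hbm hreg hZ
  have hcardΛ := hbmΛ.1
  have hcardΛ' := hbmΛ.2.1
  exact hne (huniq Λ ⟨⟨hSbar, hΛ, Or.inr ⟨rfl, bm1_iff_bm.mpr hbmΛ⟩⟩,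
    hcard.1, hcard.2.1, by omega, by omega⟩)

theorem regular_of_setOf_dRel_left_eq_singleton {Z Z' : Symb} {m : ℕ} (hreg : Regular Z)
    (hD : {Λ | DRel Z Z' m m Λ Z'} = {Z}) : Regular Z' := by
  by_contra hZ'
  obtain ⟨hZZ', huniq⟩ := Set.eq_singleton_iff_unique_mem.mp hD
  obtain ⟨⟨-, hSbar', hB⟩, hcard⟩ := hZZ'
  have hbm : Bm Z Z' := (hB.resolve_right (by omega)).2
  obtain ⟨Λ, hΛ, hne, hbmΛ⟩ := exists_bm_of_not_regular hbm hreg hZ'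
  have hcardΛ := hbmΛ.1
  have hcardΛ' := hbmΛ.2.1
  exact hne (huniq Λ
    ⟨⟨hΛ, hSbar', Or.inl ⟨rfl, hbmΛ⟩⟩, by omega, by omega, hcard.2.2⟩)

end Symbol

theorem stmt9_general (m m' : ℕ) (Z Z' : Symb) :
    (m' = m + 1 → Regular Z' → {Λ' | DRel Z Z' m m' Z Λ'} = {Z'} → Regular Z) ∧
    (m' = m → Regular Z → {Λ | DRel Z Z' m m' Λ Z'} = {Z} → Regular Z') :=
  ⟨fun hm => hm ▸ Symbol.regular_of_setOf_dRel_right_eq_singleton,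
    fun hm => hm ▸ Symbol.regular_of_setOf_dRel_left_eq_singleton⟩

theorem stmt9 (m m' : ℕ) (Z Z' : Symb) (hm : m' = m ∨ m' = m + 1)
    (hZ : IsSpecial1 Z m) (hZ' : IsSpecial0 Z' m') :
    (m' = m + 1 → Regular Z' → {Λ' | DRel Z Z' m m' Z Λ'} = {Z'} → Regular Z) ∧
    (m' = m → Regular Z → {Λ | DRel Z Z' m m' Λ Z'} = {Z} → Regular Z') :=
  stmt9_general m m' Z Z'
end

section
/- Let Z be a special symbol of defect 1 and size (m+1,m) and Z' a special symbol of defect 0 and size (m',m') with m' = m or m' = m+1. Then: (i) if m' = m+1, Z' is regular and D_Z = {Z'}, then D_{Z'} = {Z}; (ii) if m' = m, Z is regular and D_{Z'} = {Z}, then D_Z = {Z'}. -/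
open scoped symmDiff

/-!
In both parts a symbol `(A, B)` with `a₀ ≥ b₀ ≥ a₁ ≥ …` faces a regular special symbol `(C, D)`,
`c₀ > d₀ > c₁ > …`, through the inequalities `aᵢ ≥ dᵢ > aᵢ₊₁`, `cᵢ > bᵢ ≥ cᵢ₊₁` of `B̄⁺` for
`m' = m + 1`; for `m' = m` the inequalities of `B̄⁺` are these with the two symbols exchanged.

Suppose `(C, D)` is the only partner of `(A, B)` in `S̄_{(C,D)}`. Exchanging two neighbouring
entries of `C ∪ D` can only break the inequalities involving them, so it must break one of those.
For the pairs `(cᵢ, dᵢ)` and `(dᵢ, cᵢ₊₁)` this gives `aᵢ ≥ cᵢ → bᵢ ≥ dᵢ` and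
`bᵢ ≥ dᵢ → aᵢ₊₁ ≥ cᵢ₊₁`; as `A` is finite, `cᵢ > aᵢ` and `dᵢ > bᵢ` for all `i`.
Now let `Λ_M` with `M ≠ ∅` be a partner of `(C, D)`, and `x` the largest moved entry, at
position `j` of its old row. Nothing above `x` moved, so the entry `w` at position `j` of that
row of `Λ_M` is smaller than `x`. Then `w ≤ aⱼ₊₁` or `w ≤ bⱼ` (if `x = aⱼ`), resp. `w ≤ bⱼ₊₁` or
`w ≤ aⱼ₊₁` (if `x = bⱼ`), and the strict inequalities put these below `dⱼ`, resp. `cⱼ₊₁`,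
contradicting `w ≥ dⱼ`, resp. `w ≥ cⱼ₊₁`, in `Λ_M`.
-/

open Finset Equiv

def numAbove (s : Finset ℕ) (v : ℕ) : ℕ := #{z ∈ s | v < z}

lemma List.getElem?_eq_some_iff_of_pairwise_gt {l : List ℕ} (hl : l.Pairwise (· > ·))
    {i v : ℕ} : l[i]? = some v ↔ v ∈ l ∧ l.countP (v < ·) = i := by
  induction l generalizing i with
  | nil => simp
  | cons a l ih =>
    obtain ⟨ha, hl⟩ := List.pairwise_cons.1 hl
    have hnone : l.countP (a < ·) = 0 :=
      List.countP_eq_zero.2 fun b hb => by simpa using (ha b hb).le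
    cases i with
    | zero =>
      simp only [List.getElem?_cons_zero, Option.some.injEq, List.mem_cons, List.countP_cons]
      constructor
      · rintro rfl; simp [hnone]
      · rintro ⟨rfl | hv, hc⟩
        · rfl
        · simp [ha v hv] at hc
    | succ i =>
      simp only [List.getElem?_cons_succ, ih hl, List.mem_cons, List.countP_cons]
      constructor
      · rintro ⟨hv, rfl⟩; simp [hv, ha v hv]
      · rintro ⟨rfl | hv, hc⟩
        · simp [hnone] at hc
        · simpa [hv, ha v hv] using hc

lemma countP_rowList (s : Finset ℕ) (p : ℕ → Prop) [DecidablePred p] :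
    (rowList s).countP (p ·) = #{z ∈ s | p z} := by
  rw [rowList, List.countP_reverse, ← Multiset.coe_countP, Finset.sort_eq,
    Multiset.countP_eq_card_filter, Finset.card_def, Finset.filter_val]

section Entries

variable {s : Finset ℕ} {i k p u v w x y : ℕ}

lemma ent_eq_some_iff : ent s i = some v ↔ v ∈ s ∧ numAbove s v = i := by
  rw [ent, List.getElem?_eq_some_iff_of_pairwise_gt, countP_rowList]
  · simp [rowList, numAbove]
  · simpa [rowList, List.pairwise_reverse] using (Finset.sortedLT_sort s).pairwise

lemma exists_ent_of_lt (h : i < #s) : ∃ v, ent s i = some v :=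
  ⟨_, List.getElem?_eq_getElem (by simpa [rowList] using h)⟩

lemma mem_of_ent_eq_some (h : ent s i = some v) : v ∈ s :=
  (ent_eq_some_iff.1 h).1

lemma ent_numAbove (hv : v ∈ s) : ent s (numAbove s v) = some v :=
  ent_eq_some_iff.2 ⟨hv, rfl⟩

lemma ent_inj {j : ℕ} (hi : ent s i = some v) (hj : ent s j = some v) : i = j :=
  (ent_eq_some_iff.1 hi).2.symm.trans (ent_eq_some_iff.1 hj).2

lemma numAbove_lt_numAbove (hv : v ∈ s) (h : w < v) : numAbove s v < numAbove s w :=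
  card_lt_card <| ssubset_iff_of_subset (monotone_filter_right _ fun _ _ hz => h.trans hz) |>.2
    ⟨v, mem_filter.2 ⟨hv, h⟩, by simp⟩

lemma numAbove_lt_card (hv : v ∈ s) : numAbove s v < #s :=
  card_lt_card <| filter_ssubset.2 ⟨v, hv, lt_irrefl v⟩

lemma lt_card_of_ent_eq_some (h : ent s i = some v) : i < #s := by
  obtain ⟨hv, rfl⟩ := ent_eq_some_iff.1 h
  exact numAbove_lt_card hv

lemma exists_ent_ge (hw : w ∈ s) (hk : k ≤ numAbove s w) : ∃ u, ent s k = some u ∧ w ≤ u := by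
  obtain ⟨u, hu⟩ := exists_ent_of_lt (hk.trans_lt (numAbove_lt_card hw))
  refine ⟨u, hu, not_lt.1 fun hlt => ?_⟩
  obtain ⟨hus, rfl⟩ := ent_eq_some_iff.1 hu
  exact (numAbove_lt_numAbove hw hlt).not_ge hk

lemma exists_ent_succ_ge (hu : ent s k = some u) (hw : w ∈ s) (h : w < u) :
    ∃ u', ent s (k + 1) = some u' ∧ w ≤ u' := by
  obtain ⟨hus, rfl⟩ := ent_eq_some_iff.1 hu
  exact exists_ent_ge hw (numAbove_lt_numAbove hus h)

lemma exists_ent_pred_le (hu : ent s p = some u) (hw : w ∈ s) (h : u < w) :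
    ∃ k u', k + 1 = p ∧ ent s k = some u' ∧ u' ≤ w := by
  obtain ⟨hus, rfl⟩ := ent_eq_some_iff.1 hu
  have hwu := numAbove_lt_numAbove hw h
  obtain ⟨k, hk⟩ := Nat.exists_eq_add_one.2 ((Nat.zero_le _).trans_lt hwu)
  obtain ⟨u', hu'⟩ := exists_ent_of_lt (show k < #s by have := numAbove_lt_card hus; omega)
  refine ⟨k, u', hk.symm, hu', not_lt.1 fun hlt => ?_⟩
  obtain ⟨hu's, rfl⟩ := ent_eq_some_iff.1 hu'
  have := numAbove_lt_numAbove hu's hlt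
  omega

lemma ent_lt_of_notMem (hx : x ∉ s) (h : ent s (numAbove s x) = some w) : w < x := by
  obtain ⟨hw, hrk⟩ := ent_eq_some_iff.1 h
  refine lt_of_le_of_ne (not_lt.1 fun hlt => ?_) fun hwx => hx (hwx ▸ hw)
  exact (numAbove_lt_numAbove hw hlt).ne hrk

lemma numAbove_sdiff_union {M₁ M₂ : Finset ℕ} (hmax : ∀ v ∈ M₁ ∪ M₂, v ≤ x) :
    numAbove ((s \ M₁) ∪ M₂) x = numAbove s x := by
  simp only [numAbove]
  congr 1
  ext z
  have := hmax z
  simp only [mem_filter, mem_union, mem_sdiff] at this ⊢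
  grind

lemma exists_ent_lt_of_max_moved {M₁ M₂ : Finset ℕ} (hx : x ∈ M₁) (hM₁ : M₁ ⊆ s)
    (hxM₂ : x ∉ M₂) (hmax : ∀ v ∈ M₁ ∪ M₂, v ≤ x) (hcard : #((s \ M₁) ∪ M₂) = #s) :
    ∃ w, ent ((s \ M₁) ∪ M₂) (numAbove s x) = some w ∧ w < x := by
  have hxU : x ∉ (s \ M₁) ∪ M₂ := by simp [hx, hxM₂]
  obtain ⟨w, hw⟩ := exists_ent_of_lt (hcard ▸ numAbove_lt_card (hM₁ hx))
  refine ⟨w, hw, ent_lt_of_notMem hxU ?_⟩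
  rwa [numAbove_sdiff_union hmax]

lemma ent_image {σ : ℕ → ℕ} (hσ : StrictMonoOn σ s) (i : ℕ) :
    ent (s.image σ) i = (ent s i).map σ := by
  have hrow : rowList (s.image σ) = (rowList s).map σ := by
    refine List.SortedGT.eq_of_mem_iff ?_ ?_ fun a => by simp [rowList]
    · simpa [rowList] using Finset.sortedLT_sort _
    · refine (List.pairwise_map.2 ?_).sortedGT
      simpa [rowList, List.pairwise_reverse] using (Finset.sortedLT_sort s).pairwise.imp_of_mem
        fun ha hb hab => hσ (by simpa using ha) (by simpa using hb) hab
  simp [ent, hrow]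

lemma strictMonoOn_swap (hy : y ∉ s) (h : ∀ v ∈ s, v ≠ x → (v < x ↔ v < y)) :
    StrictMonoOn (swap x y) s := by
  intro a ha b hb hab
  have := h a ha
  have := h b hb
  have : a ≠ y := fun h => hy (h ▸ ha)
  have : b ≠ y := fun h => hy (h ▸ hb)
  simp only [swap_apply_def]
  split_ifs <;> omega

lemma strictMonoOn_swap_of_lt_of_next (hx : ent s p = some x) (hy : y ∉ s) (hyx : y < x)
    (hnext : ∀ u, ent s (p + 1) = some u → u < y) : StrictMonoOn (swap x y) s := by
  refine strictMonoOn_swap hy fun v hv hvx => ⟨fun hlt => ?_, (·.trans hyx)⟩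
  obtain ⟨u, hu, hvu⟩ := exists_ent_succ_ge hx hv hlt
  exact hvu.trans_lt (hnext u hu)

lemma strictMonoOn_swap_of_gt_of_prev (hx : ent s p = some x) (hy : y ∉ s) (hxy : x < y)
    (hprev : ∀ k u, k + 1 = p → ent s k = some u → y < u) : StrictMonoOn (swap x y) s := by
  refine strictMonoOn_swap hy fun v hv hvx =>
    ⟨(·.trans hxy), fun hvy => lt_of_le_of_ne (not_lt.1 fun hxv => ?_) hvx⟩
  obtain ⟨k, u, hk, hu, huv⟩ := exists_ent_pred_le hx hv hxv
  exact (hprev k u hk hu).not_ge (huv.trans hvy.le)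

lemma ent_image_swap (hx : ent s p = some x) (hy : y ∉ s) (hσ : StrictMonoOn (swap x y) s) :
    ent (s.image (swap x y)) = Function.update (ent s) p (some y) := by
  funext i
  rw [ent_image hσ, Function.update_apply]
  split_ifs with hi
  · simp [hi, hx]
  · cases hv : ent s i with
    | none => rfl
    | some v =>
      have hvx : v ≠ x := fun h => hi (ent_inj hv (h ▸ hx))
      have hvy : v ≠ y := fun h => hy (h ▸ mem_of_ent_eq_some hv)
      simp [swap_apply_of_ne_of_ne hvx hvy]

end Entries

section Relations

variable {r : ℕ → ℕ → Prop} {o o' : Option ℕ} {a b : ℕ}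

lemma oRel.rel (h : oRel r o o') (ha : o = some a) (hb : o' = some b) : r a b := by
  subst ha hb; exact h

lemma oRel_of_forall (h : ∀ a b, o = some a → o' = some b → r a b) : oRel r o o' := by
  cases o <;> cases o' <;> simp_all [oRel]

lemma oRel_some_left (h : ∀ b, o = some b → r a b) : oRel r (some a) o :=
  oRel_of_forall fun _ b ha hb => Option.some_injective _ ha ▸ h b hb

lemma oRel_some_right (h : ∀ a, o = some a → r a b) : oRel r o (some b) :=
  oRel_of_forall fun a _ ha hb => Option.some_injective _ hb ▸ h a ha

end Relations

/-- `s₀ r₁ t₀ r₂ s₁ r₁ t₁ r₂ s₂ …`, as far as the entries exist. -/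
def Interleave (r₁ r₂ : ℕ → ℕ → Prop) (s t : Finset ℕ) : Prop :=
  (∀ i, oRel r₁ (ent s i) (ent t i)) ∧ (∀ i, oRel r₂ (ent t i) (ent s (i + 1)))

lemma Interleave.strict_of_disjoint {s t : Finset ℕ} (h : Interleave (· ≥ ·) (· ≥ ·) s t)
    (hst : Disjoint s t) : Interleave (· > ·) (· > ·) s t := by
  have hne : ∀ {i j a b}, ent s i = some a → ent t j = some b → a ≠ b := fun ha hb hab =>
    disjoint_left.1 hst (mem_of_ent_eq_some ha) (hab ▸ mem_of_ent_eq_some hb)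
  refine ⟨fun i => oRel_of_forall fun a b ha hb => ?_, fun i => oRel_of_forall fun b a hb ha => ?_⟩
  · exact lt_of_le_of_ne ((h.1 i).rel ha hb) (hne ha hb).symm
  · exact lt_of_le_of_ne ((h.2 i).rel hb ha) (hne ha hb)

lemma bm1_iff {Λ Λ' : Symb} : Bm1 Λ Λ' ↔ #Λ'.1 = #Λ.2 + 1 ∧ #Λ'.2 = #Λ.1 ∧
    Interleave (· ≥ ·) (· > ·) Λ.1 Λ'.2 ∧ Interleave (· > ·) (· ≥ ·) Λ'.1 Λ.2 := by
  simp only [Bm1, Interleave]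
  tauto

lemma bm_iff_bm1 {Λ Λ' : Symb} : Bm Λ Λ' ↔ Bm1 Λ' Λ := by
  simp only [Bm, Bm1]
  constructor <;> rintro ⟨h₁, h₂, h₃, h₄, h₅, h₆⟩ <;> exact ⟨h₂.symm, h₁.symm, h₆, h₅, h₄, h₃⟩

lemma self_mem_Sbar (Z : Symb) : Z ∈ Sbar Z :=
  ⟨(∅, ∅), ⟨empty_subset _, empty_subset _⟩, by simp [lam]⟩

lemma image_swap_mem_Sbar {C D : Finset ℕ} {x y : ℕ} (hx : x ∈ C) (hxD : x ∉ D) (hy : y ∈ D)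
    (hyC : y ∉ C) : (C.image (swap x y), D.image (swap x y)) ∈ Sbar (C, D) := by
  refine ⟨({x}, {y}), ⟨by simpa using ⟨hx, hxD⟩, by simpa using ⟨hy, hyC⟩⟩, ?_⟩
  ext v <;> simp only [lam, mem_image, mem_union, mem_sdiff, mem_singleton, swap_apply_def] <;>
    grind

section UniquePartner

variable {A B C D : Finset ℕ}

lemma bm1_image_swap (h : Bm1 (A, B) (C, D)) {p q x y : ℕ}
    (hx : ent C p = some x) (hy : ent D q = some y) (hyC : y ∉ C) (hxD : x ∉ D)
    (hσC : StrictMonoOn (swap x y) C) (hσD : StrictMonoOn (swap y x) D)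
    (h₁ : oRel (· ≥ ·) (ent A q) (some x)) (h₂ : oRel (· > ·) (some x) (ent A (q + 1)))
    (h₃ : ∀ k, k + 1 = p → oRel (· ≥ ·) (ent B k) (some y))
    (h₄ : oRel (· > ·) (some y) (ent B p)) :
    Bm1 (A, B) (C.image (swap x y), D.image (swap x y)) := by
  obtain ⟨hcC, hcD, hAD, hCB⟩ := bm1_iff.1 h
  rw [bm1_iff, show D.image (swap x y) = D.image (swap y x) by rw [swap_comm]]
  simp only [Interleave] at hcC hcD hAD hCB ⊢
  rw [card_image_of_injOn hσC.injOn, card_image_of_injOn hσD.injOn,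
    ent_image_swap hx hyC hσC, ent_image_swap hy hxD hσD]
  refine ⟨hcC, hcD, ⟨fun i => ?_, fun i => ?_⟩, ⟨fun i => ?_, fun i => ?_⟩⟩ <;>
    rw [Function.update_apply] <;> split_ifs with hi
  exacts [hi ▸ h₁, hAD.1 i, hi ▸ h₂, hAD.2 i, hi ▸ h₄, hCB.1 i, h₃ i hi, hCB.2 i]

lemma not_bm1_image_swap (hreg : Disjoint C D)
    (hu : ∀ Λ' ∈ Sbar (C, D), Bm1 (A, B) Λ' → Λ' = (C, D)) {x y : ℕ} (hx : x ∈ C) (hy : y ∈ D) :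
    ¬ Bm1 (A, B) (C.image (swap x y), D.image (swap x y)) := fun hb => by
  have hyC : y ∉ C := disjoint_right.1 hreg hy
  have heq := hu _ (image_swap_mem_Sbar hx (disjoint_left.1 hreg hx) hy hyC) hb
  rw [Prod.mk.injEq] at heq
  exact hyC (heq.1 ▸ mem_image.2 ⟨x, hx, swap_apply_left x y⟩)

lemma exists_ent_ge_of_ent_le_ent (hCD : Interleave (· > ·) (· > ·) C D) (hreg : Disjoint C D)
    (h : Bm1 (A, B) (C, D)) (hu : ∀ Λ' ∈ Sbar (C, D), Bm1 (A, B) Λ' → Λ' = (C, D))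
    {i a c d : ℕ} (ha : ent A i = some a) (hc : ent C i = some c) (hd : ent D i = some d)
    (hca : c ≤ a) : ∃ b, ent B i = some b ∧ d ≤ b := by
  obtain ⟨-, -, hAD, hCB⟩ := bm1_iff.1 h
  by_contra! hb
  have hcD : c ∉ D := disjoint_left.1 hreg (mem_of_ent_eq_some hc)
  have hdC : d ∉ C := disjoint_right.1 hreg (mem_of_ent_eq_some hd)
  have hdc : d < c := (hCD.1 i).rel hc hd
  -- otherwise exchanging `cᵢ` and `dᵢ` gives a second partner of `(A, B)`
  refine not_bm1_image_swap hreg hu (mem_of_ent_eq_some hc) (mem_of_ent_eq_some hd)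
    (bm1_image_swap h hc hd hdC hcD ?_ ?_ (ha ▸ hca) ?_ ?_ ?_)
  · exact strictMonoOn_swap_of_lt_of_next hc hdC hdc fun u hu => (hCD.2 i).rel hd hu
  · exact strictMonoOn_swap_of_gt_of_prev hd hcD hdc fun k u hk hu => (hCD.2 k).rel hu (hk ▸ hc)
  · exact oRel_some_left fun a' ha' => ((hAD.2 i).rel hd ha').trans hdc
  · exact fun k hk => oRel_some_right fun b hb' => hdc.le.trans ((hCB.2 k).rel hb' (hk ▸ hc))
  · exact oRel_some_left fun b hb' => hb b hb'

lemma exists_ent_succ_ge_of_ent_le_ent (hCD : Interleave (· > ·) (· > ·) C D)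
    (hreg : Disjoint C D) (h : Bm1 (A, B) (C, D))
    (hu : ∀ Λ' ∈ Sbar (C, D), Bm1 (A, B) Λ' → Λ' = (C, D))
    {i b c d : ℕ} (hb : ent B i = some b) (hd : ent D i = some d) (hc : ent C (i + 1) = some c)
    (hdb : d ≤ b) : ∃ a, ent A (i + 1) = some a ∧ c ≤ a := by
  obtain ⟨-, -, hAD, hCB⟩ := bm1_iff.1 h
  by_contra! ha
  have hcD : c ∉ D := disjoint_left.1 hreg (mem_of_ent_eq_some hc)
  have hdC : d ∉ C := disjoint_right.1 hreg (mem_of_ent_eq_some hd)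
  have hcd : c < d := (hCD.2 i).rel hd hc
  -- otherwise exchanging `cᵢ₊₁` and `dᵢ` gives a second partner of `(A, B)`
  refine not_bm1_image_swap hreg hu (mem_of_ent_eq_some hc) (mem_of_ent_eq_some hd)
    (bm1_image_swap h hc hd hdC hcD ?_ ?_ ?_ (oRel_some_left fun a ha' => ha a ha') ?_ ?_)
  · refine strictMonoOn_swap_of_gt_of_prev hc hdC hcd fun k u hk hu => ?_
    obtain rfl : k = i := by omega
    exact (hCD.1 k).rel hu hd
  · exact strictMonoOn_swap_of_lt_of_next hd hcD hcd fun u hu => (hCD.1 (i + 1)).rel hc hu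
  · exact oRel_some_right fun a ha' => hcd.le.trans ((hAD.1 i).rel ha' hd)
  · intro k hk
    obtain rfl : k = i := by omega
    exact hb ▸ hdb
  · exact oRel_some_left fun b' hb' => ((hCB.1 (i + 1)).rel hc hb').trans hcd

lemma forall_oRel_gt_of_unique (hCD : Interleave (· > ·) (· > ·) C D) (hreg : Disjoint C D)
    (h : Bm1 (A, B) (C, D)) (hu : ∀ Λ' ∈ Sbar (C, D), Bm1 (A, B) Λ' → Λ' = (C, D)) :
    (∀ i, oRel (· > ·) (ent C i) (ent A i)) ∧ (∀ i, oRel (· > ·) (ent D i) (ent B i)) := by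
  obtain ⟨hcC, hcD, -, -⟩ := bm1_iff.1 h
  dsimp only at hcC hcD
  have step : ∀ {i a c}, ent A i = some a → ent C i = some c → c ≤ a →
      ∃ a' c', ent A (i + 1) = some a' ∧ ent C (i + 1) = some c' ∧ c' ≤ a' := by
    intro i a c ha hc hca
    obtain ⟨d, hd⟩ := exists_ent_of_lt (hcD ▸ lt_card_of_ent_eq_some ha)
    obtain ⟨b, hb, hdb⟩ := exists_ent_ge_of_ent_le_ent hCD hreg h hu ha hc hd hca
    obtain ⟨c', hc'⟩ :=
      exists_ent_of_lt (show i + 1 < #C by have := lt_card_of_ent_eq_some hb; omega)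
    obtain ⟨a', ha', hca'⟩ := exists_ent_succ_ge_of_ent_le_ent hCD hreg h hu hb hd hc' hdb
    exact ⟨a', c', ha', hc', hca'⟩
  have hCA : ∀ i, oRel (· > ·) (ent C i) (ent A i) := by
    suffices ∀ n i a c, #A ≤ i + n → ent A i = some a → ent C i = some c → c ≤ a → False from
      fun i => oRel_of_forall fun c a hc ha => not_le.1 (this #A i a c (by omega) ha hc)
    intro n
    induction n with
    | zero => intro i a c hi ha; have := lt_card_of_ent_eq_some ha; omega
    | succ n ih =>
      intro i a c hi ha hc hca
      obtain ⟨a', c', ha', hc', hca'⟩ := step ha hc hca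
      exact ih (i + 1) a' c' (by omega) ha' hc' hca'
  refine ⟨hCA, fun i => oRel_of_forall fun d b hd hb => not_le.1 fun hdb => ?_⟩
  obtain ⟨c, hc⟩ := exists_ent_of_lt (show i + 1 < #C by have := lt_card_of_ent_eq_some hb; omega)
  obtain ⟨a, ha, hca⟩ := exists_ent_succ_ge_of_ent_le_ent hCD hreg h hu hb hd hc hdb
  exact ((hCA (i + 1)).rel hc ha).not_ge hca

lemma false_of_max_moved_mem_fst (hAB : Interleave (· ≥ ·) (· ≥ ·) A B)
    (hcard : #A = #B ∨ #A = #B + 1) (h : Bm1 (A, B) (C, D))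
    (hDB : ∀ i, oRel (· > ·) (ent D i) (ent B i)) {M : Symb} (hM : SubZI M (A, B))
    (hΛ' : Bm1 (lam (A, B) M) (C, D)) {x : ℕ} (hx : x ∈ M.1)
    (hmax : ∀ v ∈ M.1 ∪ M.2, v ≤ x) : False := by
  obtain ⟨hM₁ : M.1 ⊆ A \ B, hM₂ : M.2 ⊆ B \ A⟩ := hM
  simp only [bm1_iff, lam] at h hΛ'
  obtain ⟨-, hcD, hAD, -⟩ := h
  obtain ⟨-, hcU, hUD, -⟩ := hΛ'
  obtain ⟨hxA, hxB⟩ := mem_sdiff.1 (hM₁ hx)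
  obtain ⟨w, hw, hwx⟩ := exists_ent_lt_of_max_moved hx (fun v hv => (mem_sdiff.1 (hM₁ hv)).1)
    (fun h => (mem_sdiff.1 (hM₂ h)).2 hxA) hmax (by omega)
  obtain ⟨d, hd⟩ := exists_ent_of_lt (hcD ▸ numAbove_lt_card hxA)
  have hdw : d ≤ w := (hUD.1 _).rel hw hd
  rcases mem_union.1 (mem_of_ent_eq_some hw) with hwA | hwB
  · obtain ⟨a, ha, hwa⟩ := exists_ent_succ_ge (ent_numAbove hxA) (mem_sdiff.1 hwA).1 hwx
    exact ((hAD.2 _).rel hd ha).not_ge (hdw.trans hwa)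
  · have hwB := (mem_sdiff.1 (hM₂ hwB)).1
    obtain ⟨b, hb, hwb⟩ : ∃ b, ent B (numAbove A x) = some b ∧ w ≤ b := by
      obtain ⟨j, hj⟩ : ∃ j, numAbove A x = j := ⟨_, rfl⟩
      cases j with
      | zero => exact hj ▸ exists_ent_ge hwB (Nat.zero_le _)
      | succ k =>
        obtain ⟨b', hb'⟩ := exists_ent_of_lt (show k < #B by have := numAbove_lt_card hxA; omega)
        have hxb' : x ≤ b' := (hAB.2 k).rel hb' (hj ▸ ent_numAbove hxA)
        exact hj ▸ exists_ent_succ_ge hb' hwB (hwx.trans_le hxb')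
    exact ((hDB _).rel hd hb).not_ge (hdw.trans hwb)

lemma false_of_max_moved_mem_snd (hAB : Interleave (· ≥ ·) (· ≥ ·) A B)
    (hcard : #A = #B ∨ #A = #B + 1) (h : Bm1 (A, B) (C, D))
    (hCA : ∀ i, oRel (· > ·) (ent C i) (ent A i)) {M : Symb} (hM : SubZI M (A, B))
    (hΛ' : Bm1 (lam (A, B) M) (C, D)) {x : ℕ} (hx : x ∈ M.2)
    (hmax : ∀ v ∈ M.1 ∪ M.2, v ≤ x) : False := by
  obtain ⟨hM₁ : M.1 ⊆ A \ B, hM₂ : M.2 ⊆ B \ A⟩ := hM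
  simp only [bm1_iff, lam] at h hΛ'
  obtain ⟨hcC, -, -, hCB⟩ := h
  obtain ⟨hcV, -, -, hCV⟩ := hΛ'
  obtain ⟨hxB, hxA⟩ := mem_sdiff.1 (hM₂ hx)
  obtain ⟨w, hw, hwx⟩ := exists_ent_lt_of_max_moved hx (fun v hv => (mem_sdiff.1 (hM₂ hv)).1)
    (fun h => (mem_sdiff.1 (hM₁ h)).2 hxB) (union_comm M.1 M.2 ▸ hmax) (by omega)
  obtain ⟨c, hc⟩ := exists_ent_of_lt
    (show numAbove B x + 1 < #C by have := numAbove_lt_card hxB; omega)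
  have hcw : c ≤ w := (hCV.2 _).rel hw hc
  rcases mem_union.1 (mem_of_ent_eq_some hw) with hwB | hwA
  · obtain ⟨b, hb, hwb⟩ := exists_ent_succ_ge (ent_numAbove hxB) (mem_sdiff.1 hwB).1 hwx
    exact ((hCB.1 _).rel hc hb).not_ge (hcw.trans hwb)
  · have hwA := (mem_sdiff.1 (hM₁ hwA)).1
    obtain ⟨a', ha'⟩ := exists_ent_of_lt
      (show numAbove B x < #A by have := numAbove_lt_card hxB; omega)
    have hxa' : x ≤ a' := (hAB.1 _).rel ha' (ent_numAbove hxB)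
    obtain ⟨a, ha, hwa⟩ := exists_ent_succ_ge ha' hwA (hwx.trans_le hxa')
    exact ((hCA _).rel hc ha).not_ge (hcw.trans hwa)

lemma eq_of_bm1_of_forall_oRel_gt (hAB : Interleave (· ≥ ·) (· ≥ ·) A B)
    (hcard : #A = #B ∨ #A = #B + 1) (h : Bm1 (A, B) (C, D))
    (hCA : ∀ i, oRel (· > ·) (ent C i) (ent A i)) (hDB : ∀ i, oRel (· > ·) (ent D i) (ent B i))
    {Λ : Symb} (hΛ : Λ ∈ Sbar (A, B)) (hΛ' : Bm1 Λ (C, D)) : Λ = (A, B) := by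
  obtain ⟨M, hM, rfl⟩ := hΛ
  suffices hM : M.1 ∪ M.2 = ∅ by
    obtain ⟨h₁, h₂⟩ := union_eq_empty.1 hM
    simp [lam, h₁, h₂]
  by_contra hne
  obtain ⟨x, hx, hmax⟩ := (M.1 ∪ M.2).exists_max_image id (nonempty_iff_ne_empty.2 hne)
  rcases mem_union.1 hx with hx | hx
  · exact false_of_max_moved_mem_fst hAB hcard h hDB hM hΛ' hx hmax
  · exact false_of_max_moved_mem_snd hAB hcard h hCA hM hΛ' hx hmax

theorem eq_of_bm1_of_unique_bm1 (hAB : Interleave (· ≥ ·) (· ≥ ·) A B)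
    (hcard : #A = #B ∨ #A = #B + 1) (hCD : Interleave (· ≥ ·) (· ≥ ·) C D)
    (hreg : Disjoint C D) (h : Bm1 (A, B) (C, D))
    (hu : ∀ Λ' ∈ Sbar (C, D), Bm1 (A, B) Λ' → Λ' = (C, D))
    {Λ : Symb} (hΛ : Λ ∈ Sbar (A, B)) (hΛ' : Bm1 Λ (C, D)) : Λ = (A, B) :=
  have ⟨hCA, hDB⟩ := forall_oRel_gt_of_unique (hCD.strict_of_disjoint hreg) hreg h hu
  eq_of_bm1_of_forall_oRel_gt hAB hcard h hCA hDB hΛ hΛ'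

end UniquePartner

lemma dRel_succ_iff {Z Z' Λ Λ' : Symb} {m : ℕ} : DRel Z Z' m (m + 1) Λ Λ' ↔
    Λ ∈ Sbar Z ∧ Λ' ∈ Sbar Z' ∧ Bm1 Λ Λ' ∧ #Λ.1 = m + 1 ∧ #Λ.2 = m := by
  simp only [DRel, BbarPlus, Nat.succ_ne_self, false_and, true_and, false_or]
  constructor
  · rintro ⟨⟨hΛ, hΛ', hB⟩, h₁, h₂, -, -⟩
    exact ⟨hΛ, hΛ', hB, h₁, h₂⟩
  · rintro ⟨hΛ, hΛ', hB, h₁, h₂⟩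
    exact ⟨⟨hΛ, hΛ', hB⟩, h₁, h₂, by rw [hB.1, h₂], by rw [hB.2.1, h₁]⟩

lemma dRel_self_iff {Z Z' Λ Λ' : Symb} {m : ℕ} : DRel Z Z' m m Λ Λ' ↔
    Λ ∈ Sbar Z ∧ Λ' ∈ Sbar Z' ∧ Bm1 Λ' Λ ∧ #Λ'.1 = m ∧ #Λ'.2 = m := by
  simp only [DRel, BbarPlus, bm_iff_bm1, Nat.ne_add_one, false_and, true_and, or_false]
  constructor
  · rintro ⟨⟨hΛ, hΛ', hB⟩, -, -, h₁, h₂⟩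
    exact ⟨hΛ, hΛ', hB, h₁, h₂⟩
  · rintro ⟨hΛ, hΛ', hB, h₁, h₂⟩
    exact ⟨⟨hΛ, hΛ', hB⟩, by rw [hB.1, h₂], by rw [hB.2.1, h₁], h₁, h₂⟩

theorem stmt10_general (m m' : ℕ) (Z Z' : Symb)
    (hZ : IsSpecial1 Z m) (hZ' : IsSpecial0 Z' m') :
    (m' = m + 1 → Regular Z' → {Λ' | DRel Z Z' m m' Z Λ'} = {Z'} →
      {Λ | DRel Z Z' m m' Λ Z'} = {Z}) ∧
    (m' = m → Regular Z → {Λ | DRel Z Z' m m' Λ Z'} = {Z} →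
      {Λ' | DRel Z Z' m m' Z Λ'} = {Z'}) := by
  obtain ⟨hc₁, hc₂, hZ⟩ := hZ
  obtain ⟨hc₁', hc₂', hZ'⟩ := hZ'
  simp only [Set.ext_iff, Set.mem_ofPred_eq, Set.mem_singleton_iff]
  refine ⟨fun hm hreg hD => ?_, fun hm hreg hD => ?_⟩
  · subst hm
    simp only [dRel_succ_iff] at hD ⊢
    obtain ⟨-, -, hB, -⟩ := (hD Z').2 rfl
    refine fun Λ => ⟨fun ⟨hΛ, _, hΛB, _⟩ => ?_, fun hΛ => hΛ ▸ (hD Z').2 rfl⟩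
    exact eq_of_bm1_of_unique_bm1 hZ (Or.inr (by omega)) hZ' hreg hB
      (fun Λ' hΛ' hB' => (hD Λ').1 ⟨self_mem_Sbar Z, hΛ', hB', hc₁, hc₂⟩) hΛ hΛB
  · subst hm
    simp only [dRel_self_iff] at hD ⊢
    obtain ⟨-, -, hB, -⟩ := (hD Z).2 rfl
    refine fun Λ' => ⟨fun ⟨_, hΛ', hΛB, _⟩ => ?_, fun hΛ' => hΛ' ▸ (hD Z).2 rfl⟩
    exact eq_of_bm1_of_unique_bm1 hZ' (Or.inl (by omega)) hZ hreg hB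
      (fun Λ hΛ hB' => (hD Λ).1 ⟨hΛ, self_mem_Sbar Z', hB', hc₁', hc₂'⟩) hΛ' hΛB

theorem stmt10 (m m' : ℕ) (Z Z' : Symb) (hm : m' = m ∨ m' = m + 1)
    (hZ : IsSpecial1 Z m) (hZ' : IsSpecial0 Z' m') :
    (m' = m + 1 → Regular Z' → {Λ' | DRel Z Z' m m' Z Λ'} = {Z'} →
      {Λ | DRel Z Z' m m' Λ Z'} = {Z}) ∧
    (m' = m → Regular Z → {Λ | DRel Z Z' m m' Λ Z'} = {Z} →
      {Λ' | DRel Z Z' m m' Z Λ'} = {Z'}) :=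
  stmt10_general m m' Z Z' hZ hZ'
end

section
/- Let Z = (a_1,…,a_{m+1}; b_1,…,b_m) be a special symbol of defect 1 and Z' = (c_1,…,c_{m'}; d_1,…,d_{m'}) a special symbol of defect 0 with m' = m or m' = m+1. Suppose both Z and Z' are regular and D_{Z,Z'} is one-to-one. Then: (i) if m' = m+1, for Λ ∈ S̄_Z and Λ' ∈ S̄_{Z'} one has (Λ,Λ') ∈ B̄⁺_{Z,Z'} if and only if Λ' = θ⁺(Λ), where θ⁺(Λ_M) = Λ_{θ(M)} and θ: Z_I → Z'_I sends a_i ↦ d_i and b_i ↦ c_{i+1}; (ii) if m' = m, one has (Λ,Λ') ∈ B̄⁺_{Z,Z'} if and only if Λ = θ⁺(Λ'), where θ⁺(Λ_N) = Λ_{θ(N)} and θ: Z'_I → Z_I sends c_i ↦ b_i and d_i ↦ a_{i+1}. -/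
open scoped symmDiff

/-- `posImage s t u shift`: the set of entries of `t` whose (0-based) position in the
decreasing enumeration of `t` is `i + shift` for some position `i` in `s` occupied by
an element of `u`. -/
noncomputable def posImage (s t u : Finset ℕ) (shift : ℕ) : Finset ℕ := by
  classical
  exact t.filter fun y => ∃ i x, ent s i = some x ∧ x ∈ u ∧ ent t (i + shift) = some y

/-- `D_{Z,Z'}` is one-to-one: it is nonempty, `D_Z = {Z'}` and `D_{Z'} = {Z}`. -/
def OneToOne (Z Z' : Symb) (m m' : ℕ) : Prop :=
  (∃ A A' : Symb, DRel Z Z' m m' A A') ∧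
  {Λ' | DRel Z Z' m m' Z Λ'} = {Z'} ∧
  {Λ | DRel Z Z' m m' Λ Z'} = {Z}

/-!
All comparisons between entries are turned into inequalities between the counting functions
`n ↦ #{x ∈ s | n ≤ x}` of the rows: `s_i ≥ t_{i+k} + d` for all `i` says exactly that
`#{x ∈ t | n ≤ x} ≤ #{x ∈ s | n + d ≤ x} + k` for all `n`.

In the case `m' = m + 1`, write `Z = (P, Q)` and `Z' = (R, S)`. That `D_{Z,Z'}` is one-to-one
forbids exchanging an entry of `R` with a neighbouring entry of `S`; from this, the entries of
`Z` and `Z'` form a single chain `r₁ > p₁ ≥ s₁ > q₁ ≥ r₂ > p₂ ≥ ⋯`, and `θ` pairs `p_i` with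
`s_i` and `q_i` with `r_{i+1}`. Moving such pairs across the rows preserves the interlacing
conditions, so `(Λ_M, Λ_{θ(M)}) ∈ B̄⁺`. Conversely, at every entry of `Z'` the chain makes the
counting inequalities of `B̄⁺` tight, and this determines the partner of `Λ_M` in `S̄_{Z'}`.
The case `m' = m` is the same statement with `Z` and `Z'` exchanged, since `Bm Λ Λ'` is
`Bm1 Λ' Λ`.
-/

namespace Symbols

open Finset

def cnt (s : Finset ℕ) (n : ℕ) : ℕ := #{x ∈ s | n ≤ x}

lemma cnt_anti (s : Finset ℕ) : Antitone (cnt s) := fun _ _ h =>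
  card_le_card (monotone_filter_right s fun _ _ hx => h.trans hx)

lemma cnt_le_card (s : Finset ℕ) (n : ℕ) : cnt s n ≤ #s :=
  card_filter_le _ _

lemma cnt_zero (s : Finset ℕ) : cnt s 0 = #s := by
  simp [cnt]

lemma cnt_eq_cnt_succ_add (s : Finset ℕ) (n : ℕ) :
    cnt s n = cnt s (n + 1) + if n ∈ s then 1 else 0 := by
  simp only [cnt, card_filter, ← sum_ite_eq' s n (fun _ => 1), ← sum_add_distrib]
  refine sum_congr rfl fun x _ => ?_
  split_ifs <;> omega

lemma cnt_union {s t : Finset ℕ} (h : Disjoint s t) (n : ℕ) :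
    cnt (s ∪ t) n = cnt s n + cnt t n := by
  rw [cnt, filter_union, card_union_of_disjoint (disjoint_filter_filter h), cnt, cnt]

lemma cnt_sdiff_union_add {X U V : Finset ℕ} (hU : U ⊆ X) (hV : Disjoint V X) (n : ℕ) :
    cnt ((X \ U) ∪ V) n + cnt U n = cnt X n + cnt V n := by
  rw [cnt_union (hV.symm.mono_left sdiff_subset), add_right_comm, ← cnt_union sdiff_disjoint,
    sdiff_union_of_subset hU]

lemma cnt_singleton (a n : ℕ) : cnt {a} n = if n ≤ a then 1 else 0 := by
  rw [cnt, filter_singleton]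
  split_ifs <;> rfl

lemma cnt_swap {A : Finset ℕ} {x y : ℕ} (hx : x ∈ A) (hy : y ∉ A) (n : ℕ) :
    cnt ((A \ {x}) ∪ {y}) n + (if n ≤ x then 1 else 0) = cnt A n + if n ≤ y then 1 else 0 := by
  rw [← cnt_singleton, ← cnt_singleton]
  exact cnt_sdiff_union_add (singleton_subset_iff.mpr hx) (disjoint_singleton_left.mpr hy) n

lemma eq_of_forall_cnt_eq {s t : Finset ℕ} (h : ∀ n, cnt s n = cnt t n) : s = t := by
  ext x
  have hs := cnt_eq_cnt_succ_add s x
  rw [h, h, cnt_eq_cnt_succ_add t x, add_right_inj] at hs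
  split_ifs at hs <;> simp_all

lemma eq_of_forall_mem_cnt_eq {s t U : Finset ℕ} (hs : s ⊆ U) (ht : t ⊆ U)
    (h : ∀ n ∈ U, cnt s n = cnt t n) : s = t := by
  refine eq_of_forall_cnt_eq fun n => ?_
  by_cases hU : {u ∈ U | n ≤ u}.Nonempty
  · set u := min' _ hU
    have hu : u ∈ U ∧ n ≤ u := mem_filter.mp (min'_mem _ hU)
    have hcnt : ∀ v ⊆ U, cnt v n = cnt v u := fun v hv => by
      refine congrArg card (filter_congr fun x hx => ⟨fun hnx => ?_, hu.2.trans⟩)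
      exact min'_le _ x (mem_filter.mpr ⟨hv hx, hnx⟩)
    rw [hcnt s hs, hcnt t ht, h u hu.1]
  · have hcnt : ∀ v ⊆ U, cnt v n = 0 := fun v hv => by
      refine card_eq_zero.mpr (filter_eq_empty_iff.mpr fun x hx hnx => hU ?_)
      exact ⟨x, mem_filter.mpr ⟨hv hx, hnx⟩⟩
    rw [hcnt s hs, hcnt t ht]

lemma countP_lt_eq_of_getElem? {l : List ℕ} (hl : l.Pairwise (· > ·)) {i x : ℕ}
    (h : l[i]? = some x) : l.countP (x < ·) = i := by
  induction l generalizing i with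
  | nil => simp at h
  | cons a l ih =>
    rw [List.pairwise_cons] at hl
    cases i with
    | zero =>
      obtain rfl : a = x := by simpa using h
      simpa [List.countP_eq_zero] using fun y hy => (hl.1 y hy).le
    | succ i =>
      have hx : x ∈ l := List.mem_of_getElem? h
      simp [ih hl.2 (by simpa using h), hl.1 x hx]

lemma mem_rowList {s : Finset ℕ} {x : ℕ} : x ∈ rowList s ↔ x ∈ s := by
  simp [rowList]

lemma length_rowList (s : Finset ℕ) : (rowList s).length = #s := by
  simp [rowList]

lemma pairwise_rowList (s : Finset ℕ) : (rowList s).Pairwise (· > ·) :=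
  List.pairwise_reverse.mpr (List.sortedLT_iff_pairwise.mp (sortedLT_sort s))

lemma cnt_eq_countP (s : Finset ℕ) (n : ℕ) : cnt s n = (rowList s).countP (n ≤ ·) := by
  rw [rowList, List.countP_reverse, ← Multiset.coe_countP, sort_eq, cnt,
    Multiset.countP_eq_card_filter]
  rfl

lemma ent_eq_some_iff {s : Finset ℕ} {i x : ℕ} :
    ent s i = some x ↔ x ∈ s ∧ cnt s (x + 1) = i := by
  have key : ∀ {j}, ent s j = some x → cnt s (x + 1) = j := fun h => by
    rw [cnt_eq_countP]
    exact countP_lt_eq_of_getElem? (pairwise_rowList s) h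
  refine ⟨fun h => ⟨mem_rowList.mp (List.mem_of_getElem? h), key h⟩, fun ⟨hx, hi⟩ => ?_⟩
  obtain ⟨j, hj⟩ := List.mem_iff_getElem?.mp (mem_rowList.mpr hx)
  rwa [← hi, key hj]

lemma ent_mem {s : Finset ℕ} {i x : ℕ} (h : ent s i = some x) : x ∈ s :=
  (ent_eq_some_iff.mp h).1

lemma ent_eq_none_iff {s : Finset ℕ} {i : ℕ} : ent s i = none ↔ #s ≤ i := by
  rw [ent, List.getElem?_eq_none_iff, length_rowList]

lemma exists_ent_eq_some {s : Finset ℕ} {i : ℕ} (h : i < #s) : ∃ x, ent s i = some x := by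
  rw [← length_rowList] at h
  exact ⟨_, List.getElem?_eq_getElem h⟩

lemma ent_lt_card {s : Finset ℕ} {i x : ℕ} (h : ent s i = some x) : i < #s := by
  by_contra! hi
  simp [ent_eq_none_iff.mpr hi] at h

lemma lt_cnt_iff {s : Finset ℕ} {i x : ℕ} (h : ent s i = some x) (n : ℕ) :
    i < cnt s n ↔ n ≤ x := by
  obtain ⟨hx, rfl⟩ := ent_eq_some_iff.mp h
  constructor
  · intro hn
    by_contra! hxn
    exact (cnt_anti s hxn).not_gt hn
  · intro hn
    have hstep := cnt_eq_cnt_succ_add s x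
    rw [if_pos hx] at hstep
    have := cnt_anti s hn
    omega

lemma cnt_le_of_ent_lt {s : Finset ℕ} {i x n : ℕ} (h : ent s i = some x) (hx : x < n) :
    cnt s n ≤ i :=
  not_lt.mp fun hi => hx.not_ge ((lt_cnt_iff h n).mp hi)

lemma cnt_le_iff {s : Finset ℕ} {i n : ℕ} : cnt s n ≤ i ↔ ∀ x, ent s i = some x → x < n := by
  rcases h : ent s i with _ | x
  · exact iff_of_true ((cnt_le_card s n).trans (ent_eq_none_iff.mp h)) (by simp)
  · simpa using (lt_cnt_iff h n).not

lemma lt_of_oRel_ge {s t : Finset ℕ} {i j x y : ℕ} (hst : Disjoint s t)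
    (h : oRel (· ≥ ·) (ent s i) (ent t j)) (hx : ent s i = some x) (hy : ent t j = some y) :
    y < x := by
  rw [hx, hy] at h
  exact lt_of_le_of_ne h fun e => disjoint_left.mp hst (ent_mem hx) (e ▸ ent_mem hy)

lemma forall_oRel_ent_iff (s t : Finset ℕ) (d k : ℕ) (hc : #t ≤ #s + k) :
    (∀ i, oRel (fun x y => y + d ≤ x) (ent s i) (ent t (i + k))) ↔
      ∀ n, cnt t n ≤ cnt s (n + d) + k := by
  constructor
  · intro h n
    by_contra! hlt
    obtain ⟨y, hy⟩ := exists_ent_eq_some ((show cnt t n - 1 < cnt t n by omega).trans_le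
      (cnt_le_card t n))
    obtain ⟨x, hx⟩ := exists_ent_eq_some (show cnt t n - 1 - k < #s by
      have := cnt_le_card t n; omega)
    have hyx := h (cnt t n - 1 - k)
    rw [hx, show cnt t n - 1 - k + k = cnt t n - 1 by omega, hy] at hyx
    have hny := (lt_cnt_iff hy n).mp (by omega)
    have := (lt_cnt_iff hx (n + d)).mpr (by simp only [oRel] at hyx; omega)
    omega
  · intro h i
    rcases hx : ent s i with _ | x
    · trivial
    rcases hy : ent t (i + k) with _ | y
    · trivial
    have := (lt_cnt_iff hy y).mpr le_rfl
    exact (lt_cnt_iff hx (y + d)).mp (by have := h y; omega)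

lemma bm1_iff_cnt {L L' : Symb} : Bm1 L L' ↔
    #L'.1 = #L.2 + 1 ∧ #L'.2 = #L.1 ∧
    (∀ n, cnt L'.2 n ≤ cnt L.1 n) ∧ (∀ n, cnt L.1 n ≤ cnt L'.2 (n + 1) + 1) ∧
    (∀ n, cnt L'.1 n ≤ cnt L.2 n + 1) ∧ (∀ n, cnt L.2 n ≤ cnt L'.1 (n + 1)) := by
  refine and_congr_right fun h₁ => and_congr_right fun h₂ => ?_
  exact and_congr (forall_oRel_ent_iff _ _ 0 0 (by omega))
    (and_congr (forall_oRel_ent_iff _ _ 1 1 (by omega))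
      (and_congr (forall_oRel_ent_iff _ _ 0 1 (by omega)) (forall_oRel_ent_iff _ _ 1 0 (by omega))))

lemma bm_iff_bm1 {L L' : Symb} : Bm L L' ↔ Bm1 L' L := by
  unfold Bm Bm1
  constructor <;> rintro ⟨h₁, h₂, h₃, h₄, h₅, h₆⟩ <;> exact ⟨h₂.symm, h₁.symm, h₆, h₅, h₄, h₃⟩

section lam

variable {Z N : Symb} (hN₁ : N.1 ⊆ Z.1) (hN₂ : N.2 ⊆ Z.2)
include hN₁ hN₂

lemma lam_union : (lam Z N).1 ∪ (lam Z N).2 = Z.1 ∪ Z.2 := by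
  ext x
  have := @hN₁ x; have := @hN₂ x
  simp only [lam, mem_union, mem_sdiff]
  tauto

lemma disjoint_lam (hZ : Disjoint Z.1 Z.2) : Disjoint (lam Z N).1 (lam Z N).2 := by
  rw [disjoint_left]
  intro x
  have := @hN₁ x; have := @hN₂ x; have := @disjoint_left.mp hZ x
  simp only [lam, mem_union, mem_sdiff]
  tauto

lemma cnt_lam_add (hZ : Disjoint Z.1 Z.2) (n : ℕ) :
    cnt (lam Z N).1 n + cnt (lam Z N).2 n = cnt Z.1 n + cnt Z.2 n := by
  rw [← cnt_union (disjoint_lam hN₁ hN₂ hZ), lam_union hN₁ hN₂, cnt_union hZ]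

lemma lam_fst_eq (hZ : Disjoint Z.1 Z.2) : (lam Z N).1 = (Z.1 ∪ Z.2) \ (lam Z N).2 := by
  rw [← lam_union hN₁ hN₂, union_sdiff_cancel_right (disjoint_lam hN₁ hN₂ hZ)]

lemma lam_snd_subset : (lam Z N).2 ⊆ Z.1 ∪ Z.2 :=
  lam_union hN₁ hN₂ ▸ subset_union_right

end lam

def positions (X U : Finset ℕ) : Finset ℕ := {i ∈ range #X | ∃ x ∈ U, ent X i = some x}

lemma mem_positions {X U : Finset ℕ} {i : ℕ} :
    i ∈ positions X U ↔ ∃ x ∈ U, ent X i = some x := by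
  simp only [positions, mem_filter, mem_range, and_iff_right_iff_imp]
  rintro ⟨x, -, hx⟩
  exact ent_lt_card hx

lemma mem_posImage {X Y U : Finset ℕ} {k y : ℕ} :
    y ∈ posImage X Y U k ↔ ∃ i ∈ positions X U, ent Y (i + k) = some y := by
  classical
  simp only [posImage, mem_filter, mem_positions]
  constructor
  · rintro ⟨-, i, x, hx, hxU, hy⟩
    exact ⟨i, ⟨x, hxU, hx⟩, hy⟩
  · rintro ⟨i, ⟨x, hxU, hx⟩, hy⟩
    exact ⟨ent_mem hy, i, x, hx, hxU, hy⟩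

lemma posImage_subset {X Y U : Finset ℕ} {k : ℕ} : posImage X Y U k ⊆ Y := fun _ hy =>
  have ⟨_, _, hy⟩ := mem_posImage.mp hy
  ent_mem hy

lemma posImage_self {X U : Finset ℕ} (hU : U ⊆ X) : posImage X X U 0 = U := by
  ext y
  simp only [mem_posImage, mem_positions, add_zero]
  constructor
  · rintro ⟨i, ⟨x, hxU, hx⟩, hy⟩
    exact Option.some_injective _ (hx.symm.trans hy) ▸ hxU
  · intro hy
    have h := ent_eq_some_iff.mpr ⟨hU hy, rfl⟩
    exact ⟨_, ⟨y, hy, h⟩, h⟩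

lemma cnt_posImage (X Y U : Finset ℕ) (k n : ℕ) :
    cnt (posImage X Y U k) n = #{i ∈ positions X U | i + k < cnt Y n} := by
  refine (card_nbij' (fun i => (ent Y (i + k)).getD 0) (fun y => cnt Y (y + 1) - k)
    ?_ ?_ ?_ ?_).symm
  · intro i hi
    simp only [coe_filter, Set.mem_ofPred_eq] at hi ⊢
    obtain ⟨y, hy⟩ := exists_ent_eq_some (hi.2.trans_le (cnt_le_card Y n))
    rw [hy, Option.getD_some]
    exact ⟨mem_posImage.mpr ⟨i, hi.1, hy⟩, (lt_cnt_iff hy n).mp hi.2⟩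
  · intro y hy
    simp only [coe_filter, Set.mem_ofPred_eq] at hy ⊢
    obtain ⟨i, hi, hiy⟩ := mem_posImage.mp hy.1
    rw [(ent_eq_some_iff.mp hiy).2, Nat.add_sub_cancel]
    exact ⟨hi, (lt_cnt_iff hiy n).mpr hy.2⟩
  · intro i hi
    simp only [coe_filter, Set.mem_ofPred_eq] at hi
    obtain ⟨y, hy⟩ := exists_ent_eq_some (hi.2.trans_le (cnt_le_card Y n))
    simp [hy, (ent_eq_some_iff.mp hy).2]
  · intro y hy
    simp only [coe_filter, Set.mem_ofPred_eq] at hy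
    obtain ⟨i, -, hiy⟩ := mem_posImage.mp hy.1
    simp [(ent_eq_some_iff.mp hiy).2, hiy]

lemma cnt_eq_card_positions {X U : Finset ℕ} (hU : U ⊆ X) (n : ℕ) :
    cnt U n = #{i ∈ positions X U | i < cnt X n} := by
  conv_lhs => rw [← posImage_self hU]
  rw [cnt_posImage]
  rfl

lemma card_filter_lt_mono (I : Finset ℕ) {t t' : ℕ} (h : t ≤ t') :
    #{i ∈ I | i < t} ≤ #{i ∈ I | i < t'} :=
  card_le_card (monotone_filter_right I fun _ _ hi => hi.trans_le h)

lemma card_filter_lt_add_le (I : Finset ℕ) {t t' : ℕ} (h : t ≤ t') :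
    #{i ∈ I | i < t'} + t ≤ #{i ∈ I | i < t} + t' := by
  have hsub : {i ∈ I | i < t'} ⊆ {i ∈ I | i < t} ∪ Ico t t' := fun i hi => by
    simp only [mem_filter, mem_union, mem_Ico] at hi ⊢
    by_cases hit : i < t
    · exact Or.inl ⟨hi.1, hit⟩
    · exact Or.inr ⟨by omega, hi.2⟩
  have := (card_le_card hsub).trans (card_union_le _ _)
  simp only [Nat.card_Ico] at this
  omega

/-- The chain `r₁ > p₁ ≥ s₁ > q₁ ≥ r₂ > p₂ ≥ s₂ > ⋯` of the entries of `P, Q, R, S`. -/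
structure Chain (P Q R S : Finset ℕ) : Prop where
  s_le_p : ∀ n, cnt S n ≤ cnt P n
  q_lt_s : ∀ n, cnt Q n ≤ cnt S (n + 1)
  p_lt_r : ∀ n, cnt P n ≤ cnt R (n + 1)
  r_le_q : ∀ n, cnt R n ≤ cnt Q n + 1

variable {P Q R S : Finset ℕ}

lemma Chain.cnt_add_lt (ch : Chain P Q R S) {n : ℕ} (hn : n ∈ R ∪ S) :
    cnt P n + cnt Q n < cnt R n + cnt S n := by
  have hR := cnt_eq_cnt_succ_add R n
  have hS := cnt_eq_cnt_succ_add S n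
  have := cnt_anti R n.le_succ
  have := cnt_anti S n.le_succ
  have := ch.q_lt_s n
  have := ch.p_lt_r n
  rcases mem_union.mp hn with h | h <;> simp only [h, if_true] at hR hS <;> split_ifs at hR hS <;>
    omega

/-- Both rows of `Λ'` together count like `R ∪ S`, so at `n ∈ R ∪ S` the strict inequality
`Chain.cnt_add_lt` forces the two upper bounds of `Bm1` on them to be equalities. -/
lemma Chain.cnt_snd_eq (ch : Chain P Q R S) (hPQ : Disjoint P Q) (hRS : Disjoint R S)
    {M N : Symb} (hM₁ : M.1 ⊆ P) (hM₂ : M.2 ⊆ Q) (hN₁ : N.1 ⊆ R) (hN₂ : N.2 ⊆ S)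
    (h : Bm1 (lam (P, Q) M) (lam (R, S) N)) {n : ℕ} (hn : n ∈ R ∪ S) :
    cnt (lam (R, S) N).2 n = cnt (lam (P, Q) M).1 n := by
  obtain ⟨-, -, h₁, -, h₂, -⟩ := bm1_iff_cnt.mp h
  have := cnt_lam_add (Z := (P, Q)) hM₁ hM₂ hPQ n
  have := cnt_lam_add (Z := (R, S)) hN₁ hN₂ hRS n
  have := ch.cnt_add_lt hn
  have := h₁ n
  have := h₂ n
  simp only at *
  omega

lemma Chain.lam_eq_of_bm1 (ch : Chain P Q R S) (hPQ : Disjoint P Q) (hRS : Disjoint R S)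
    {M N N' : Symb} (hM₁ : M.1 ⊆ P) (hM₂ : M.2 ⊆ Q) (hN₁ : N.1 ⊆ R) (hN₂ : N.2 ⊆ S)
    (hN₁' : N'.1 ⊆ R) (hN₂' : N'.2 ⊆ S)
    (h : Bm1 (lam (P, Q) M) (lam (R, S) N)) (h' : Bm1 (lam (P, Q) M) (lam (R, S) N')) :
    lam (R, S) N = lam (R, S) N' := by
  have h₂ : (lam (R, S) N).2 = (lam (R, S) N').2 :=
    eq_of_forall_mem_cnt_eq (lam_snd_subset hN₁ hN₂) (lam_snd_subset hN₁' hN₂') fun n hn =>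
      (ch.cnt_snd_eq hPQ hRS hM₁ hM₂ hN₁ hN₂ h hn).trans
        (ch.cnt_snd_eq hPQ hRS hM₁ hM₂ hN₁' hN₂' h' hn).symm
  refine Prod.ext ?_ h₂
  rw [lam_fst_eq hN₁ hN₂ hRS, lam_fst_eq hN₁' hN₂' hRS, h₂]

/-- Counted by positions, `M₁` and its image `posImage P S M₁ 0` are both read off the one
function `t ↦ #{i ∈ positions P M₁ | i < t}`, which is monotone and `1`-Lipschitz; likewise
for `M₂`. Each condition of `Bm1` is then linear arithmetic. -/
lemma Chain.bm1_lam_posImage (ch : Chain P Q R S) (hPQ : Disjoint P Q) (hRS : Disjoint R S)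
    (hR : #R = #Q + 1) (hS : #S = #P) {M₁ M₂ : Finset ℕ} (hM₁ : M₁ ⊆ P) (hM₂ : M₂ ⊆ Q) :
    Bm1 (lam (P, Q) (M₁, M₂)) (lam (R, S) (posImage Q R M₂ 1, posImage P S M₁ 0)) := by
  set N₁ := posImage Q R M₂ 1
  set N₂ := posImage P S M₁ 0
  have hN₁ : N₁ ⊆ R := posImage_subset
  have hN₂ : N₂ ⊆ S := posImage_subset
  have eL₁ := cnt_sdiff_union_add hM₁ (hPQ.symm.mono_left hM₂)
  have eL₂ := cnt_sdiff_union_add hM₂ (hPQ.mono_left hM₁)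
  have eL'₁ := cnt_sdiff_union_add hN₁ (hRS.symm.mono_left hN₂)
  have eL'₂ := cnt_sdiff_union_add hN₂ (hRS.mono_left hN₁)
  have cM₁ := cnt_eq_card_positions hM₁
  have cM₂ := cnt_eq_card_positions hM₂
  have cN₁ n : cnt N₁ n = #{i ∈ positions Q M₂ | i < cnt R n - 1} := by
    rw [cnt_posImage]
    exact congrArg card (filter_congr fun _ _ => by omega)
  have cN₂ n : cnt N₂ n = #{i ∈ positions P M₁ | i < cnt S n} := cnt_posImage _ _ _ _ _
  have g₁ {t t'} (h : t ≤ t') :=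
    And.intro (card_filter_lt_mono (positions P M₁) h) (card_filter_lt_add_le (positions P M₁) h)
  have g₂ {t t'} (h : t ≤ t') :=
    And.intro (card_filter_lt_mono (positions Q M₂) h) (card_filter_lt_add_le (positions Q M₂) h)
  rw [bm1_iff_cnt]
  simp only [lam, ← cnt_zero]
  refine ⟨?_, ?_, ?_, ?_, ?_, ?_⟩
  · have := eL'₁ 0; have := eL₂ 0; have := cN₁ 0; have := cM₂ 0; have := cN₂ 0; have := cM₁ 0
    simp only [cnt_zero, hR, hS, Nat.add_sub_cancel] at *
    omega
  · have := eL'₂ 0; have := eL₁ 0; have := cN₁ 0; have := cM₂ 0; have := cN₂ 0; have := cM₁ 0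
    simp only [cnt_zero, hR, hS, Nat.add_sub_cancel] at *
    omega
  all_goals
    intro n
    have := eL₁ n; have := eL₂ n; have := eL'₁ n; have := eL'₂ n
    have := eL'₁ (n + 1); have := eL'₂ (n + 1)
    have := cM₁ n; have := cM₂ n; have := cN₁ n; have := cN₂ n
    have := cN₁ (n + 1); have := cN₂ (n + 1)
    have := ch.p_lt_r n; have := ch.q_lt_s n
    have hRQ : cnt R n - 1 ≤ cnt Q n := by have := ch.r_le_q n; omega
    have hRQ' : cnt R (n + 1) - 1 ≤ cnt Q n := by
      have := ch.r_le_q (n + 1); have := cnt_anti Q (Nat.le_add_right n 1); omega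
    have := g₁ (ch.s_le_p n)
    have := g₁ ((cnt_anti S (Nat.le_add_right n 1)).trans (ch.s_le_p n))
    have := g₂ hRQ
    have := g₂ hRQ'
    omega

lemma bm1_lam_swap_of_lt (h : Bm1 (P, Q) (R, S)) (hRS : Disjoint R S) {x y : ℕ}
    (hx : x ∈ R) (hy : y ∈ S) (hyx : y < x)
    (hSP : ∀ n, y < n → n ≤ x → cnt S n < cnt P n)
    (hQR : ∀ n, y ≤ n → n < x → cnt Q n < cnt R (n + 1)) :
    Bm1 (P, Q) (lam (R, S) ({x}, {y})) := by
  obtain ⟨h₁, h₂, h₃, h₄, h₅, h₆⟩ := bm1_iff_cnt.mp h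
  have eR := cnt_swap hx (disjoint_right.mp hRS hy)
  have eS := cnt_swap hy (disjoint_left.mp hRS hx)
  rw [bm1_iff_cnt]
  simp only [lam, ← cnt_zero] at *
  refine ⟨?_, ?_, fun n => ?_, fun n => ?_, fun n => ?_, fun n => ?_⟩
  · have := eR 0; simp only [zero_le, if_true] at this; omega
  · have := eS 0; simp only [zero_le, if_true] at this; omega
  · have := eS n; have := h₃ n; have := hSP n; split_ifs at * <;> omega
  · have := eS (n + 1); have := h₄ n; split_ifs at * <;> omega
  · have := eR n; have := h₅ n; split_ifs at * <;> omega
  · have := eR (n + 1); have := h₆ n; have := hQR n; split_ifs at * <;> omega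

lemma bm1_lam_swap_of_gt (h : Bm1 (P, Q) (R, S)) (hRS : Disjoint R S) {x y : ℕ}
    (hx : x ∈ S) (hy : y ∈ R) (hyx : y < x)
    (hPS : ∀ n, y ≤ n → n < x → cnt P n ≤ cnt S (n + 1))
    (hRQ : ∀ n, y < n → n ≤ x → cnt R n ≤ cnt Q n) :
    Bm1 (P, Q) (lam (R, S) ({y}, {x})) := by
  obtain ⟨h₁, h₂, h₃, h₄, h₅, h₆⟩ := bm1_iff_cnt.mp h
  have eR := cnt_swap hy (disjoint_right.mp hRS hx)
  have eS := cnt_swap hx (disjoint_left.mp hRS hy)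
  rw [bm1_iff_cnt]
  simp only [lam, ← cnt_zero] at *
  refine ⟨?_, ?_, fun n => ?_, fun n => ?_, fun n => ?_, fun n => ?_⟩
  · have := eR 0; simp only [zero_le, if_true] at this; omega
  · have := eS 0; simp only [zero_le, if_true] at this; omega
  · have := eS n; have := h₃ n; split_ifs at * <;> omega
  · have := eS (n + 1); have := h₄ n; have := hPS n; split_ifs at * <;> omega
  · have := eR n; have := h₅ n; have := hRQ n; split_ifs at * <;> omega
  · have := eR (n + 1); have := h₆ n; split_ifs at * <;> omega

lemma q_lt_s_of_p_lt_r_succ (hRS : Disjoint R S)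
    (hRS₂ : ∀ i, oRel (· ≥ ·) (ent S i) (ent R (i + 1))) (h : Bm1 (P, Q) (R, S))
    (huniq : ∀ x ∈ R, ∀ y ∈ S, ¬Bm1 (P, Q) (lam (R, S) ({x}, {y}))) {i : ℕ}
    (hPR : oRel (· > ·) (ent R (i + 1)) (ent P (i + 1))) : oRel (· > ·) (ent S i) (ent Q i) := by
  obtain ⟨hR, -⟩ := bm1_iff_cnt.mp h
  dsimp only at hR
  rcases hs : ent S i with _ | s
  · trivial
  rcases hq : ent Q i with _ | q
  · trivial
  obtain ⟨r, hr⟩ := exists_ent_eq_some (show i + 1 < #R by have := ent_lt_card hq; omega)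
  show q < s
  by_contra! hsq
  refine huniq r (ent_mem hr) s (ent_mem hs) (bm1_lam_swap_of_gt h hRS (ent_mem hs) (ent_mem hr)
    (lt_of_oRel_ge hRS.symm (hRS₂ i) hs hr) (fun n hrn hns => ?_) (fun n hrn hns => ?_))
  · have : cnt P n ≤ i + 1 := cnt_le_iff.mpr fun p hp => by
      rw [hr, hp] at hPR
      exact (hPR : p < r).trans_le hrn
    have := (lt_cnt_iff hs (n + 1)).mpr hns
    omega
  · have := cnt_le_of_ent_lt hr hrn
    have := (lt_cnt_iff hq n).mpr (hns.trans hsq)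
    omega

lemma p_lt_r_of_q_lt_s (hRS : Disjoint R S) (hRS₁ : ∀ i, oRel (· ≥ ·) (ent R i) (ent S i))
    (hPQ : #P ≤ #Q + 1) (h : Bm1 (P, Q) (R, S))
    (huniq : ∀ x ∈ R, ∀ y ∈ S, ¬Bm1 (P, Q) (lam (R, S) ({x}, {y}))) {i : ℕ}
    (hQS : oRel (· > ·) (ent S i) (ent Q i)) : oRel (· > ·) (ent R i) (ent P i) := by
  obtain ⟨hR, hS, -⟩ := bm1_iff_cnt.mp h
  dsimp only at hR hS
  rcases hp : ent P i with _ | p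
  · cases ent R i <;> trivial
  have := ent_lt_card hp
  obtain ⟨r, hr⟩ := exists_ent_eq_some (show i < #R by omega)
  obtain ⟨s, hs⟩ := exists_ent_eq_some (show i < #S by omega)
  rw [hr]
  show p < r
  by_contra! hrp
  refine huniq r (ent_mem hr) s (ent_mem hs) (bm1_lam_swap_of_lt h hRS (ent_mem hr) (ent_mem hs)
    (lt_of_oRel_ge hRS (hRS₁ i) hr hs) (fun n hsn hnr => ?_) (fun n hsn hnr => ?_))
  · have := cnt_le_of_ent_lt hs hsn
    have := (lt_cnt_iff hp n).mpr (hnr.trans hrp)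
    omega
  · have : cnt Q n ≤ i := cnt_le_iff.mpr fun q hq => by
      rw [hs, hq] at hQS
      exact (hQS : q < s).trans_le hsn
    have := (lt_cnt_iff hr (n + 1)).mpr hnr
    omega

/-- Downward induction on `i`: `p_{i+1} < r_{i+1}` forces `q_i < s_i` (otherwise exchanging
`r_{i+1}` and `s_i` preserves `Bm1`), which forces `p_i < r_i` (otherwise exchanging `r_i`
and `s_i` does). -/
lemma chain_of_forall_not_bm1_swap (hRS : Disjoint R S)
    (hRS₁ : ∀ i, oRel (· ≥ ·) (ent R i) (ent S i))
    (hRS₂ : ∀ i, oRel (· ≥ ·) (ent S i) (ent R (i + 1)))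
    (hQP : #Q ≤ #P) (hPQ : #P ≤ #Q + 1) (h : Bm1 (P, Q) (R, S))
    (huniq : ∀ x ∈ R, ∀ y ∈ S, ¬Bm1 (P, Q) (lam (R, S) ({x}, {y}))) : Chain P Q R S := by
  obtain ⟨hR, hS, hSP, -, hRQ, -⟩ := bm1_iff_cnt.mp h
  dsimp only at hR hS
  have hPR : ∀ i, oRel (· > ·) (ent R i) (ent P i) := by
    suffices ∀ j i, #P ≤ i + j → oRel (· > ·) (ent R i) (ent P i) from
      fun i => this _ i le_add_self
    intro j
    induction j with
    | zero =>
      intro i hi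
      rw [ent_eq_none_iff.mpr (show #P ≤ i by simpa using hi)]
      cases ent R i <;> trivial
    | succ j ih =>
      exact fun i hi => p_lt_r_of_q_lt_s hRS hRS₁ hPQ h huniq
        (q_lt_s_of_p_lt_r_succ hRS hRS₂ h huniq (ih (i + 1) (by omega)))
  have hQS i := q_lt_s_of_p_lt_r_succ hRS hRS₂ h huniq (hPR (i + 1))
  exact ⟨hSP, (forall_oRel_ent_iff S Q 1 0 (by omega)).mp hQS,
    (forall_oRel_ent_iff R P 1 0 (by omega)).mp hPR, hRQ⟩

theorem bm1_lam_iff (hPQ : Disjoint P Q) (hRS : Disjoint R S)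
    (hRS₁ : ∀ i, oRel (· ≥ ·) (ent R i) (ent S i))
    (hRS₂ : ∀ i, oRel (· ≥ ·) (ent S i) (ent R (i + 1)))
    (hQP : #Q ≤ #P) (hPQ₁ : #P ≤ #Q + 1) (h : Bm1 (P, Q) (R, S))
    (huniq : ∀ x ∈ R, ∀ y ∈ S, ¬Bm1 (P, Q) (lam (R, S) ({x}, {y})))
    {M N : Symb} (hM₁ : M.1 ⊆ P) (hM₂ : M.2 ⊆ Q) (hN₁ : N.1 ⊆ R) (hN₂ : N.2 ⊆ S) :
    Bm1 (lam (P, Q) M) (lam (R, S) N) ↔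
      lam (R, S) N = lam (R, S) (posImage Q R M.2 1, posImage P S M.1 0) := by
  have ch := chain_of_forall_not_bm1_swap hRS hRS₁ hRS₂ hQP hPQ₁ h huniq
  obtain ⟨hR, hS, -⟩ := bm1_iff_cnt.mp h
  have hθ := ch.bm1_lam_posImage hPQ hRS hR hS hM₁ hM₂
  exact ⟨fun hN => ch.lam_eq_of_bm1 hPQ hRS hM₁ hM₂ hN₁ hN₂ posImage_subset posImage_subset hN hθ,
    fun e => e ▸ hθ⟩

variable {Z Z' : Symb} {m m' : ℕ}

lemma self_mem_sbar (Z : Symb) : Z ∈ Sbar Z :=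
  ⟨(∅, ∅), ⟨empty_subset _, empty_subset _⟩, by simp [lam]⟩

section swap

variable {x y : ℕ} (hZ : Regular Z) (hx : x ∈ Z.1) (hy : y ∈ Z.2)
include hZ hx hy

lemma lam_swap_mem_sbar : lam Z ({x}, {y}) ∈ Sbar Z :=
  ⟨({x}, {y}), ⟨singleton_subset_iff.mpr (mem_sdiff.mpr ⟨hx, disjoint_left.mp hZ hx⟩),
    singleton_subset_iff.mpr (mem_sdiff.mpr ⟨hy, disjoint_right.mp hZ hy⟩)⟩, rfl⟩

lemma card_lam_swap : #(lam Z ({x}, {y})).1 = #Z.1 ∧ #(lam Z ({x}, {y})).2 = #Z.2 := by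
  have h₁ := cnt_swap hx (disjoint_right.mp hZ hy) 0
  have h₂ := cnt_swap hy (disjoint_left.mp hZ hx) 0
  simp only [cnt_zero, zero_le, if_true, add_left_inj] at h₁ h₂
  exact ⟨h₁, h₂⟩

end swap

lemma lam_swap_ne {x y : ℕ} (hZ : Regular Z) (hx : x ∈ Z.1) : lam Z ({x}, {y}) ≠ Z := fun h =>
  disjoint_left.mp hZ hx (congrArg Prod.snd h ▸ mem_union_right _ (mem_singleton_self x))

lemma bbarPlus_iff_of_eq_succ (hm : m' = m + 1) {Λ Λ' : Symb} :
    BbarPlus Z Z' m m' Λ Λ' ↔ Λ ∈ Sbar Z ∧ Λ' ∈ Sbar Z' ∧ Bm1 Λ Λ' := by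
  subst hm
  simp [BbarPlus]

lemma bbarPlus_iff_of_eq (hm : m' = m) {Λ Λ' : Symb} :
    BbarPlus Z Z' m m' Λ Λ' ↔ Λ ∈ Sbar Z ∧ Λ' ∈ Sbar Z' ∧ Bm1 Λ' Λ := by
  subst hm
  simp [BbarPlus, bm_iff_bm1]

lemma OneToOne.drel (h : OneToOne Z Z' m m') : DRel Z Z' m m' Z Z' := by
  have : Z' ∈ {Λ' | DRel Z Z' m m' Z Λ'} := h.2.1 ▸ rfl
  exact this

lemma OneToOne.not_bm1_swap_right (h : OneToOne Z Z' m m') (hm : m' = m + 1)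
    (hZ' : Regular Z') : ∀ x ∈ Z'.1, ∀ y ∈ Z'.2, ¬Bm1 Z (lam Z' ({x}, {y})) :=
  fun x hx y hy hB => by
    obtain ⟨-, hZ₁, hZ₂, hZ'₁, hZ'₂⟩ := OneToOne.drel h
    obtain ⟨hc₁, hc₂⟩ := card_lam_swap hZ' hx hy
    have hD : DRel Z Z' m m' Z (lam Z' ({x}, {y})) :=
      ⟨(bbarPlus_iff_of_eq_succ hm).mpr ⟨self_mem_sbar Z, lam_swap_mem_sbar hZ' hx hy, hB⟩,
        hZ₁, hZ₂, hc₁.trans hZ'₁, hc₂.trans hZ'₂⟩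
    exact lam_swap_ne hZ' hx (h.2.1.subset hD)

lemma OneToOne.not_bm1_swap_left (h : OneToOne Z Z' m m') (hm : m' = m) (hZ : Regular Z) :
    ∀ x ∈ Z.1, ∀ y ∈ Z.2, ¬Bm1 Z' (lam Z ({x}, {y})) :=
  fun x hx y hy hB => by
    obtain ⟨-, hZ₁, hZ₂, hZ'₁, hZ'₂⟩ := OneToOne.drel h
    obtain ⟨hc₁, hc₂⟩ := card_lam_swap hZ hx hy
    have hD : DRel Z Z' m m' (lam Z ({x}, {y})) Z' :=
      ⟨(bbarPlus_iff_of_eq hm).mpr ⟨lam_swap_mem_sbar hZ hx hy, self_mem_sbar Z', hB⟩,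
        hc₁.trans hZ₁, hc₂.trans hZ₂, hZ'₁, hZ'₂⟩
    exact lam_swap_ne hZ hx (h.2.2.subset hD)

end Symbols

open Symbols Finset in
theorem stmt14_general (m m' : ℕ) (Z Z' : Symb)
    (hZ : IsSpecial1 Z m) (hZ' : IsSpecial0 Z' m')
    (hregZ : Regular Z) (hregZ' : Regular Z') (h11 : OneToOne Z Z' m m') :
    (m' = m + 1 → ∀ M : Symb, SubZI M Z → ∀ Λ' ∈ Sbar Z',
      (BbarPlus Z Z' m m' (lam Z M) Λ' ↔
       Λ' = lam Z' (posImage Z.2 Z'.1 M.2 1, posImage Z.1 Z'.2 M.1 0))) ∧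
    (m' = m → ∀ N : Symb, SubZI N Z' → ∀ Λ ∈ Sbar Z,
      (BbarPlus Z Z' m m' Λ (lam Z' N) ↔
       Λ = lam Z (posImage Z'.2 Z.1 N.2 1, posImage Z'.1 Z.2 N.1 0))) := by
  obtain ⟨hZ₁, hZ₂, hZ_ge, hZ_ge'⟩ := hZ
  obtain ⟨hZ'₁, hZ'₂, hZ'_ge, hZ'_ge'⟩ := hZ'
  refine ⟨fun hm M hM Λ' hΛ' => ?_, fun hm N hN Λ hΛ => ?_⟩
  · obtain ⟨N, hN, rfl⟩ := hΛ'
    rw [bbarPlus_iff_of_eq_succ hm, and_iff_right ⟨M, hM, rfl⟩, and_iff_right ⟨N, hN, rfl⟩]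
    exact bm1_lam_iff hregZ hregZ' hZ'_ge hZ'_ge' (by omega) (by omega)
      ((bbarPlus_iff_of_eq_succ hm).mp h11.drel.1).2.2 (h11.not_bm1_swap_right hm hregZ')
      (hM.1.trans sdiff_subset) (hM.2.trans sdiff_subset) (hN.1.trans sdiff_subset)
      (hN.2.trans sdiff_subset)
  · obtain ⟨M, hM, rfl⟩ := hΛ
    rw [bbarPlus_iff_of_eq hm, and_iff_right ⟨M, hM, rfl⟩, and_iff_right ⟨N, hN, rfl⟩]
    exact bm1_lam_iff hregZ' hregZ hZ_ge hZ_ge' (by omega) (by omega)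
      ((bbarPlus_iff_of_eq hm).mp h11.drel.1).2.2 (h11.not_bm1_swap_left hm hregZ)
      (hN.1.trans sdiff_subset) (hN.2.trans sdiff_subset) (hM.1.trans sdiff_subset)
      (hM.2.trans sdiff_subset)

theorem stmt14 (m m' : ℕ) (Z Z' : Symb) (hm : m' = m ∨ m' = m + 1)
    (hZ : IsSpecial1 Z m) (hZ' : IsSpecial0 Z' m')
    (hregZ : Regular Z) (hregZ' : Regular Z') (h11 : OneToOne Z Z' m m') :
    (m' = m + 1 → ∀ M : Symb, SubZI M Z → ∀ Λ' ∈ Sbar Z',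
      (BbarPlus Z Z' m m' (lam Z M) Λ' ↔
       Λ' = lam Z' (posImage Z.2 Z'.1 M.2 1, posImage Z.1 Z'.2 M.1 0))) ∧
    (m' = m → ∀ N : Symb, SubZI N Z' → ∀ Λ ∈ Sbar Z,
      (BbarPlus Z Z' m m' Λ (lam Z' N) ↔
       Λ = lam Z (posImage Z'.2 Z.1 N.2 1, posImage Z'.1 Z.2 N.1 0))) :=
  stmt14_general m m' Z Z' hZ hZ' hregZ hregZ' h11
end
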